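/- arXiv:2403.18014 — 6 statements merged into one kernel-verified Lean document; each statement's English description precedes it below -/
import Mathlib

section
/- Let p ∈ (1,2) and let α > 4π. Then for every K > 0 there exists a Lipschitz function u : ℝ² → ℝ with compact support such that ‖u‖ ≤ 1 and ∫_{ℝ²} Φ_{α,j₀}(u(x)) dx ≥ K; that is, sup{∫_{ℝ²} Φ_{α,j₀}(u) dx : u Lipschitz with compact support, ‖u‖ ≤ 1} = +∞. -/
/-!
For `L ≥ 0` the Moser function `v_L(x) = min (L, log⁺ (1/|x|))` equals `L` on the disc of radius
`e^{-L}`, is `log (1/|x|)` on the annulus `e^{-L} < |x| < 1` and vanishes outside the unit disc.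
Its Dirichlet energy is exactly `2πL`, while `∫ v_L^p` stays bounded in `L` because
`log (1/r) ≤ 2 r^{-1/2}`. Fix `T ∈ (4π/α, 1)` and put `u_L = √(T/(2πL)) v_L`: then
`‖u_L‖² ≤ T + O(1/L) ≤ 1` for large `L`, and since `u_L ≡ √(TL/(2π))` on the small disc,
`∫ Φ(u_L) ≥ π e^{-2L} Φ(√(TL/(2π))) ≈ π e^{(αT/(2π) - 2) L} → ∞` because `αT/(2π) > 2`.
-/

open MeasureTheory Real Filter Topology

noncomputable section

/-- The plane `ℝ²`. -/
abbrev R2 : Type := EuclideanSpace ℝ (Fin 2)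

/-- `j₀ = min {j ∈ ℕ, j ≥ 1 : 2 j ≥ p*}` where `p* = 2p/(2-p)`; for `1 < p < 2` this is
the ceiling of `p/(2-p)` (which is `> 1`). -/
def jzero (p : ℝ) : ℕ := ⌈p / (2 - p)⌉₊

/-- The Young function `Φ_{α,j₀}(t) = e^{α t²} - ∑_{j=0}^{j₀-1} (α^j/j!) t^{2j}`. -/
def Phi (α : ℝ) (j₀ : ℕ) (t : ℝ) : ℝ :=
  Real.exp (α * t ^ 2) - ∑ j ∈ Finset.range j₀, α ^ j / (j.factorial : ℝ) * |t| ^ (2 * j)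

/-- The norm `‖u‖ = (∫ |∇u|² + (∫ |u|^p)^{2/p})^{1/2}` of the zero-mass space `E`. -/
def sobNorm (p : ℝ) (u : R2 → ℝ) : ℝ :=
  Real.sqrt ((∫ x, ‖fderiv ℝ u x‖ ^ 2) + (∫ x, |u x| ^ p) ^ (2 / p))

/-- Chern-Simons gauge field `A₁[u](x) = -(1/4π) ∫ (x₂-y₂) u(y)²/|x-y|² dy`. -/
def gaugeA1 (u : R2 → ℝ) (x : R2) : ℝ :=
  -(1 / (4 * π)) * ∫ y, (x 1 - y 1) * (u y) ^ 2 / ‖x - y‖ ^ 2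

/-- Chern-Simons gauge field `A₂[u](x) = (1/4π) ∫ (x₁-y₁) u(y)²/|x-y|² dy`. -/
def gaugeA2 (u : R2 → ℝ) (x : R2) : ℝ :=
  (1 / (4 * π)) * ∫ y, (x 0 - y 0) * (u y) ^ 2 / ‖x - y‖ ^ 2

/-- Chern-Simons gauge field
`A₀[u](x) = (1/2π) ∫ [(x₁-y₁) A₂[u](y) - (x₂-y₂) A₁[u](y)] u(y)²/|x-y|² dy`. -/
def gaugeA0 (u : R2 → ℝ) (x : R2) : ℝ :=
  (1 / (2 * π)) *
    ∫ y, ((x 0 - y 0) * gaugeA2 u y - (x 1 - y 1) * gaugeA1 u y) * (u y) ^ 2 / ‖x - y‖ ^ 2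

/-- `F(t) = ∫₀ᵗ f(s) ds`. -/
def Fint (f : ℝ → ℝ) (t : ℝ) : ℝ := ∫ s in (0:ℝ)..t, f s

/-- `f` has critical exponential growth with exponent `α₀`:
`|f(t)| e^{-α t²} → 0` for `α > α₀` and `→ +∞` for `0 < α < α₀` as `t → +∞`. -/
def CriticalExpGrowth (f : ℝ → ℝ) (α₀ : ℝ) : Prop :=
  (∀ α > α₀, Tendsto (fun t => |f t| * Real.exp (-α * t ^ 2)) atTop (nhds 0)) ∧
  (∀ α : ℝ, 0 < α → α < α₀ → Tendsto (fun t => |f t| * Real.exp (-α * t ^ 2)) atTop atTop)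

/-- The limit functional
`J_∞(u) = (1/2)∫ (|∇u|² + (A₁[u]² + A₂[u]²)u²) + (a_∞/p)∫|u|^p - ∫ F(u)`. -/
def Jinf (p aInf : ℝ) (f : ℝ → ℝ) (u : R2 → ℝ) : ℝ :=
  (1 / 2) * (∫ x, (‖fderiv ℝ u x‖ ^ 2 + ((gaugeA1 u x) ^ 2 + (gaugeA2 u x) ^ 2) * (u x) ^ 2))
    + (aInf / p) * (∫ x, |u x| ^ p) - ∫ x, Fint f (u x)

/-- `J_∞'(u)[u] = ∫ (|∇u|² + 3(A₁[u]² + A₂[u]²)u²) + a_∞ ∫ |u|^p - ∫ f(u)u`. -/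
def JinfD (p aInf : ℝ) (f : ℝ → ℝ) (u : R2 → ℝ) : ℝ :=
  (∫ x, (‖fderiv ℝ u x‖ ^ 2 + 3 * ((gaugeA1 u x) ^ 2 + (gaugeA2 u x) ^ 2) * (u x) ^ 2))
    + aInf * (∫ x, |u x| ^ p) - ∫ x, f (u x) * u x

/-- `(f₂)`: `t ↦ f(t)/t⁵` is strictly increasing on `(0,∞)`. -/
def CondF2 (f : ℝ → ℝ) : Prop := StrictMonoOn (fun t => f t / t ^ 5) (Set.Ioi 0)

/-- `(f₃)`: there are `t₀ > 0`, `M₀ > 0`, `ϑ ∈ [0,1)` with `0 < t^ϑ F(t) ≤ M₀ f(t)` for `t > t₀`. -/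
def CondF3 (f : ℝ → ℝ) : Prop :=
  ∃ t₀ > (0:ℝ), ∃ M₀ > (0:ℝ), ∃ ϑ : ℝ, 0 ≤ ϑ ∧ ϑ < 1 ∧
    ∀ t > t₀, 0 < t ^ ϑ * Fint f t ∧ t ^ ϑ * Fint f t ≤ M₀ * f t

/-- `(f₄)`: `F(t) e^{-α₀ t²} → β₀ > 0` as `t → +∞`. -/
def CondF4 (f : ℝ → ℝ) (α₀ : ℝ) : Prop :=
  ∃ β₀ > (0:ℝ), Tendsto (fun t => Fint f t * Real.exp (-α₀ * t ^ 2)) atTop (nhds β₀)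

open Set

lemma integral_fun_norm_R2 (f : ℝ → ℝ) :
    ∫ x : R2, f ‖x‖ = 2 * π * ∫ r in Ioi 0, r * f r := by
  rw [integral_fun_norm_addHaar volume f, finrank_euclideanSpace_fin, measureReal_def,
    EuclideanSpace.volume_ball_fin_two, ENNReal.toReal_mul, ENNReal.toReal_pow,
    ENNReal.toReal_ofReal zero_le_one, ENNReal.toReal_ofReal pi_nonneg]
  simp only [one_pow, one_mul, pow_one, smul_eq_mul, Nat.add_one_sub_one]
  ring

lemma ae_norm_ne {E : Type*} [NormedAddCommGroup E] [NormedSpace ℝ E] [MeasurableSpace E]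
    [BorelSpace E] [FiniteDimensional ℝ E] [Nontrivial E] (μ : Measure E) [μ.IsAddHaarMeasure]
    (r : ℝ) : ∀ᵐ x ∂μ, ‖x‖ ≠ r := by
  have : {x : E | ¬‖x‖ ≠ r} = Metric.sphere 0 r := by
    ext x
    simp
  rw [ae_iff, this]
  exact Measure.addHaar_sphere μ 0 r

lemma LipschitzWith.const_smul {X 𝕜 E : Type*} [PseudoEMetricSpace X] [SeminormedAddGroup 𝕜]
    [SeminormedAddGroup E] [SMulZeroClass 𝕜 E] [IsBoundedSMul 𝕜 E] {f : X → E} {K : NNReal}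
    (hf : LipschitzWith K f) (c : 𝕜) : LipschitzWith (‖c‖₊ * K) (c • f) :=
  (lipschitzWith_smul c).comp hf

def moserProfile (L r : ℝ) : ℝ := max (-log (max r (exp (-L)))) 0

def moserFun (L : ℝ) (x : R2) : ℝ := moserProfile L ‖x‖

section MoserProfile

variable {L r : ℝ}

lemma moserProfile_nonneg (L r : ℝ) : 0 ≤ moserProfile L r := le_max_right _ _

lemma moserProfile_of_one_le (hL : 0 ≤ L) (hr : 1 ≤ r) : moserProfile L r = 0 := by
  have : exp (-L) ≤ r := (exp_le_one_iff.2 (neg_nonpos.2 hL)).trans hr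
  rw [moserProfile, max_eq_left this]
  exact max_eq_right (neg_nonpos.2 (log_nonneg hr))

lemma moserProfile_of_le_exp (hL : 0 ≤ L) (hr : r ≤ exp (-L)) : moserProfile L r = L := by
  rw [moserProfile, max_eq_right hr, log_exp, neg_neg, max_eq_left hL]

lemma moserProfile_of_mem_Icc (hr : r ∈ Icc (exp (-L)) 1) : moserProfile L r = -log r := by
  have : 0 < r := (exp_pos _).trans_le hr.1
  rw [moserProfile, max_eq_left hr.1, max_eq_left (neg_nonneg.2 (log_nonpos this.le hr.2))]

lemma moserProfile_le_rpow (hr : 0 < r) : moserProfile L r ≤ 2 * r ^ (-(1 / 2) : ℝ) := by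
  refine max_le ?_ (by positivity)
  calc -log (max r (exp (-L))) ≤ log r⁻¹ := by
        rw [log_inv]
        exact neg_le_neg (log_le_log hr (le_max_left _ _))
    _ ≤ r⁻¹ ^ (1 / 2 : ℝ) / (1 / 2) := log_le_rpow_div (inv_nonneg.2 hr.le) one_half_pos
    _ = 2 * r ^ (-(1 / 2) : ℝ) := by rw [inv_rpow hr.le, ← rpow_neg hr.le]; ring

lemma mul_moserProfile_rpow_le {p : ℝ} (hp : 0 ≤ p) (hp2 : p ≤ 2) (hr : 0 < r) (hr1 : r ≤ 1) :
    r * moserProfile L r ^ p ≤ 2 ^ p := by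
  calc r * moserProfile L r ^ p ≤ r * (2 * r ^ (-(1 / 2) : ℝ)) ^ p := by
        gcongr
        exacts [moserProfile_nonneg L r, moserProfile_le_rpow hr]
    _ = 2 ^ p * r ^ (1 - p / 2) := by
        rw [mul_rpow zero_le_two (by positivity), ← rpow_mul hr.le,
          show 1 - p / 2 = 1 + -(1 / 2) * p by ring, rpow_add hr, rpow_one]
        ring
    _ ≤ 2 ^ p := mul_le_of_le_one_right (by positivity) (rpow_le_one hr.le hr1 (by linarith))

lemma lipschitzOnWith_log_Ici (L : ℝ) : LipschitzOnWith (exp L).toNNReal log (Ici (exp (-L))) := by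
  refine (convex_Ici _).lipschitzOnWith_of_nnnorm_deriv_le
    (fun x hx => differentiableAt_log ((exp_pos _).trans_le hx).ne') fun x hx => ?_
  have hx0 : 0 < x := (exp_pos _).trans_le hx
  rw [← NNReal.coe_le_coe, coe_nnnorm, deriv_log, norm_inv, norm_of_nonneg hx0.le,
    coe_toNNReal _ (exp_pos L).le]
  exact inv_le_of_inv_le₀ (exp_pos _) (by rwa [← exp_neg])

lemma lipschitzWith_moserProfile (L : ℝ) : LipschitzWith (exp L).toNNReal (moserProfile L) := by
  refine LipschitzWith.of_dist_le_mul fun r s => ?_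
  have hlog := (lipschitzOnWith_log_Ici L).dist_le_mul _ (le_max_right r (exp (-L))) _
    (le_max_right s (exp (-L)))
  rw [coe_toNNReal _ (exp_pos L).le] at hlog ⊢
  calc dist (moserProfile L r) (moserProfile L s)
      ≤ dist (log (max r (exp (-L)))) (log (max s (exp (-L)))) := by
        simp only [moserProfile, dist_eq]
        refine (abs_max_sub_max_le_abs _ _ 0).trans_eq ?_
        rw [neg_sub_neg, abs_sub_comm]
    _ ≤ exp L * dist (max r (exp (-L))) (max s (exp (-L))) := hlog
    _ ≤ exp L * dist r s := by
        gcongr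
        exact abs_max_sub_max_le_abs r s _

end MoserProfile

lemma norm_fderiv_log_norm {E : Type*} [NormedAddCommGroup E] [InnerProductSpace ℝ E] {x : E}
    (hx : x ≠ 0) : ‖fderiv ℝ (fun y : E => log ‖y‖) x‖ = ‖x‖⁻¹ := by
  have hsq : (fun y : E => log ‖y‖) = fun y => 2⁻¹ * log (‖y‖ ^ 2) := by
    ext y
    rw [log_pow]
    ring
  have hx2 : ‖x‖ ^ 2 ≠ 0 := by positivity
  rw [hsq, (((hasStrictFDerivAt_norm_sq x).hasFDerivAt.log hx2).const_mul 2⁻¹).fderiv,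
    ← Nat.cast_smul_eq_nsmul ℝ, norm_smul, norm_smul, norm_smul, innerSL_apply_norm]
  simp only [norm_inv, norm_pow, norm_norm, Nat.cast_ofNat, Real.norm_ofNat]
  field_simp

section MoserFun

variable {L : ℝ}

lemma lipschitzWith_moserFun (L : ℝ) : LipschitzWith (exp L).toNNReal (moserFun L) := by
  have := (lipschitzWith_moserProfile L).comp (lipschitzWith_one_norm (E := R2))
  rwa [mul_one] at this

lemma hasCompactSupport_moserFun (hL : 0 ≤ L) : HasCompactSupport (moserFun L) :=
  HasCompactSupport.intro (isCompact_closedBall (0 : R2) 1) fun x hx =>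
    moserProfile_of_one_le hL (lt_of_not_ge (by simpa using hx)).le

lemma norm_fderiv_moserFun_sq (hL : 0 ≤ L) {x : R2} (h₁ : ‖x‖ ≠ exp (-L)) (h₂ : ‖x‖ ≠ 1) :
    ‖fderiv ℝ (moserFun L) x‖ ^ 2 = (Ioo (exp (-L)) 1).indicator (fun r => (r ^ 2)⁻¹) ‖x‖ := by
  have hnhds {s : Set ℝ} (hs : IsOpen s) (h : ‖x‖ ∈ s) : {y : R2 | ‖y‖ ∈ s} ∈ 𝓝 x :=
    (hs.preimage continuous_norm).mem_nhds h
  by_cases hx : ‖x‖ ∈ Ioo (exp (-L)) 1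
  · have hloc : moserFun L =ᶠ[𝓝 x] fun y => -log ‖y‖ := eventuallyEq_of_mem
      (hnhds isOpen_Ioo hx) fun y hy => moserProfile_of_mem_Icc (Ioo_subset_Icc_self hy)
    have hx0 : x ≠ 0 := norm_pos_iff.1 ((exp_pos _).trans hx.1)
    rw [indicator_of_mem hx, hloc.fderiv_eq, fderiv_fun_neg, norm_neg, norm_fderiv_log_norm hx0,
      inv_pow]
  · obtain ⟨c, hc⟩ : ∃ c, moserFun L =ᶠ[𝓝 x] fun _ => c := by
      rcases h₁.lt_or_gt with h | h
      · exact ⟨L, eventuallyEq_of_mem (hnhds isOpen_Iio h) fun y hy =>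
          moserProfile_of_le_exp hL (le_of_lt hy)⟩
      · have h1 : 1 < ‖x‖ := lt_of_le_of_ne (not_lt.1 fun h' => hx ⟨h, h'⟩) h₂.symm
        exact ⟨0, eventuallyEq_of_mem (hnhds isOpen_Ioi h1) fun y hy =>
          moserProfile_of_one_le hL (le_of_lt hy)⟩
    rw [indicator_of_notMem hx, hc.fderiv_eq, fderiv_const_apply, norm_zero,
      zero_pow two_ne_zero]

end MoserFun

section MoserIntegrals

variable {L : ℝ}

lemma integral_norm_fderiv_moserFun_sq (hL : 0 ≤ L) :
    ∫ x, ‖fderiv ℝ (moserFun L) x‖ ^ 2 = 2 * π * L := by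
  have hae : (fun x => ‖fderiv ℝ (moserFun L) x‖ ^ 2) =ᵐ[volume]
      fun x => (Ioo (exp (-L)) 1).indicator (fun r => (r ^ 2)⁻¹) ‖x‖ := by
    filter_upwards [ae_norm_ne volume (exp (-L)), ae_norm_ne volume 1] with x h₁ h₂
    exact norm_fderiv_moserFun_sq hL h₁ h₂
  have hm : exp (-L) ≤ 1 := exp_le_one_iff.2 (neg_nonpos.2 hL)
  rw [integral_congr_ae hae, integral_fun_norm_R2]
  simp_rw [← indicator_mul_right _ (fun r : ℝ => r)]
  rw [setIntegral_indicator measurableSet_Ioo,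
    inter_eq_right.2 (Ioo_subset_Ioi_self.trans (Ioi_subset_Ioi (exp_pos _).le)),
    setIntegral_congr_fun measurableSet_Ioo (g := fun r => r⁻¹) fun r hr => by
      have : r ≠ 0 := ((exp_pos _).trans hr.1).ne'
      field_simp,
    ← integral_Ioc_eq_integral_Ioo, ← intervalIntegral.integral_of_le hm,
    integral_inv_of_pos (exp_pos _) one_pos, one_div, log_inv, log_exp, neg_neg]

lemma integral_moserFun_rpow_le (hL : 0 ≤ L) {p : ℝ} (hp : 0 < p) (hp2 : p ≤ 2) :
    ∫ x, moserFun L x ^ p ≤ 2 * π * 2 ^ p := by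
  simp only [moserFun]
  rw [integral_fun_norm_R2 fun r => moserProfile L r ^ p]
  gcongr
  have hbound : ∀ r ∈ Ioi (0 : ℝ),
      r * moserProfile L r ^ p ≤ (Ioc (0 : ℝ) 1).indicator (fun _ => (2 : ℝ) ^ p) r := by
    intro r hr
    by_cases hr1 : r ≤ 1
    · rw [indicator_of_mem (show r ∈ Ioc (0 : ℝ) 1 from ⟨hr, hr1⟩)]
      exact mul_moserProfile_rpow_le hp.le hp2 hr hr1
    · rw [moserProfile_of_one_le hL (not_le.1 hr1).le, zero_rpow hp.ne', mul_zero]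
      exact indicator_nonneg (fun _ _ => by positivity) r
  calc ∫ r in Ioi 0, r * moserProfile L r ^ p
      ≤ ∫ r in Ioi 0, (Ioc (0 : ℝ) 1).indicator (fun _ => (2 : ℝ) ^ p) r := by
        refine integral_mono_of_nonneg
          (ae_restrict_of_forall_mem measurableSet_Ioi fun r hr =>
            mul_nonneg (le_of_lt hr) (rpow_nonneg (moserProfile_nonneg L r) p))
          ((integrableOn_const ?_).integrable_indicator measurableSet_Ioc)
          (ae_restrict_of_forall_mem measurableSet_Ioi hbound)
        exact (Measure.restrict_apply_le _ _).trans_lt measure_Ioc_lt_top |>.ne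
    _ = 2 ^ p := by
        rw [setIntegral_indicator measurableSet_Ioc, inter_eq_right.2 Ioc_subset_Ioi_self,
          setIntegral_const]
        simp

end MoserIntegrals

lemma sobNorm_smul {p : ℝ} (hp : p ≠ 0) (c : ℝ) (u : R2 → ℝ) :
    sobNorm p (c • u) = |c| * sobNorm p u := by
  have hgrad : ∫ x, ‖fderiv ℝ (c • u) x‖ ^ 2 = c ^ 2 * ∫ x, ‖fderiv ℝ u x‖ ^ 2 := by
    rw [fderiv_const_smul_field, ← integral_const_mul]
    congr with x
    rw [Pi.smul_apply, norm_smul, mul_pow, norm_eq_abs, sq_abs]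
  have hlp : (∫ x, |(c • u) x| ^ p) ^ (2 / p) = c ^ 2 * (∫ x, |u x| ^ p) ^ (2 / p) := by
    simp_rw [Pi.smul_apply, smul_eq_mul, abs_mul, mul_rpow (abs_nonneg c) (abs_nonneg _)]
    rw [integral_const_mul, mul_rpow (by positivity) (integral_nonneg fun x => by positivity),
      ← rpow_mul (abs_nonneg c), mul_div_cancel₀ 2 hp, rpow_two, sq_abs]
  rw [sobNorm, sobNorm, hgrad, hlp, ← mul_add, sqrt_mul (sq_nonneg c), sqrt_sq_eq_abs]

lemma sobNorm_moserFun_le {L p : ℝ} (hL : 0 ≤ L) (hp : 0 < p) (hp2 : p ≤ 2) :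
    sobNorm p (moserFun L) ≤ √(2 * π * L + (2 * π * 2 ^ p) ^ (2 / p)) := by
  simp_rw [sobNorm, integral_norm_fderiv_moserFun_sq hL, moserFun,
    abs_of_nonneg (moserProfile_nonneg _ _)]
  gcongr
  · exact integral_nonneg fun x => rpow_nonneg (moserProfile_nonneg _ _) p
  · exact integral_moserFun_rpow_le hL hp hp2

lemma eventually_sobNorm_le_one {p T : ℝ} (hp : 0 < p) (hp2 : p ≤ 2) (hT : T < 1) :
    ∀ᶠ L in atTop, sobNorm p (√(T / (2 * π * L)) • moserFun L) ≤ 1 := by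
  set C := (2 * π * 2 ^ p) ^ (2 / p)
  have hlim : Tendsto (fun L : ℝ => T + T * C / (2 * π) / L) atTop (𝓝 T) := by
    simpa using tendsto_const_nhds.add
      ((tendsto_const_nhds (x := T * C / (2 * π))).div_atTop tendsto_id)
  filter_upwards [eventually_gt_atTop 0, hlim.eventually (eventually_le_nhds hT)] with L hL hle
  rw [sobNorm_smul hp.ne', abs_of_nonneg (sqrt_nonneg _)]
  calc √(T / (2 * π * L)) * sobNorm p (moserFun L)
      ≤ √(T / (2 * π * L)) * √(2 * π * L + C) := by
        gcongr
        exact sobNorm_moserFun_le hL.le hp hp2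
    _ = √(T + T * C / (2 * π) / L) := by
        rw [← sqrt_mul' _ (by positivity)]
        congr 1
        field_simp
    _ ≤ 1 := sqrt_le_one.2 hle

lemma Phi_eq_exp_sub_sum (α : ℝ) (j₀ : ℕ) (t : ℝ) :
    Phi α j₀ t = exp (α * t ^ 2) - ∑ j ∈ Finset.range j₀, (α * t ^ 2) ^ j / j.factorial := by
  rw [Phi]
  congr 1
  refine Finset.sum_congr rfl fun j _ => ?_
  rw [pow_mul, sq_abs, mul_pow]
  ring

section Phi

variable {α : ℝ} {j₀ : ℕ}

lemma Phi_nonneg (hα : 0 ≤ α) (t : ℝ) : 0 ≤ Phi α j₀ t := by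
  rw [Phi_eq_exp_sub_sum, sub_nonneg]
  exact sum_le_exp_of_nonneg (by positivity) _

lemma Phi_zero (hj : j₀ ≠ 0) : Phi α j₀ 0 = 0 := by
  obtain ⟨n, rfl⟩ := Nat.exists_eq_succ_of_ne_zero hj
  simp [Phi_eq_exp_sub_sum, Finset.sum_range_succ']

lemma continuous_Phi : Continuous (Phi α j₀) := by
  unfold Phi
  fun_prop

lemma integral_Phi_moserFun_ge (hα : 0 ≤ α) (hj : j₀ ≠ 0) {L : ℝ} (hL : 0 ≤ L) (b : ℝ) :
    π * exp (-(2 * L)) * Phi α j₀ (b * L) ≤ ∫ x, Phi α j₀ ((b • moserFun L) x) := by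
  have hcont : Continuous (Phi α j₀ ∘ (b • moserFun L)) :=
    continuous_Phi.comp ((lipschitzWith_moserFun L).continuous.const_smul b)
  have hsupp : HasCompactSupport (Phi α j₀ ∘ (b • moserFun L)) :=
    (hasCompactSupport_moserFun hL).smul_left.comp_left (Phi_zero hj)
  have hint : Integrable (Phi α j₀ ∘ (b • moserFun L)) :=
    hcont.integrable_of_hasCompactSupport hsupp
  calc π * exp (-(2 * L)) * Phi α j₀ (b * L)
      = ∫ x in Metric.closedBall (0 : R2) (exp (-L)), Phi α j₀ ((b • moserFun L) x) := by
        rw [setIntegral_congr_fun measurableSet_closedBall (g := fun _ => Phi α j₀ (b * L))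
          fun x hx => by
            simp [moserFun, moserProfile_of_le_exp hL (mem_closedBall_zero_iff.1 hx)],
          setIntegral_const, smul_eq_mul, measureReal_def,
          EuclideanSpace.volume_closedBall_fin_two, ENNReal.toReal_mul, ENNReal.toReal_pow,
          ENNReal.toReal_ofReal (exp_pos _).le, ENNReal.toReal_ofReal pi_nonneg, ← exp_nat_mul]
        push_cast
        ring_nf
    _ ≤ ∫ x, Phi α j₀ ((b • moserFun L) x) :=
        setIntegral_le_integral hint (ae_of_all _ fun x => Phi_nonneg hα _)

end Phi

lemma tendsto_exp_neg_mul_sub_sum {γ : ℝ} (hγ : 2 < γ) (n : ℕ) :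
    Tendsto (fun L =>
      exp (-(2 * L)) * (exp (γ * L) - ∑ j ∈ Finset.range n, (γ * L) ^ j / j.factorial))
      atTop atTop := by
  have hexp : Tendsto (fun L => exp ((γ - 2) * L)) atTop atTop :=
    tendsto_exp_atTop.comp (tendsto_id.const_mul_atTop (by linarith))
  have hpoly : Tendsto (fun L => ∑ j ∈ Finset.range n,
      (γ / 2) ^ j / j.factorial * ((2 * L) ^ j * exp (-(2 * L)))) atTop (𝓝 0) := by
    simpa using tendsto_finsetSum (Finset.range n) fun j _ =>
      ((tendsto_pow_mul_exp_neg_atTop_nhds_zero j).comp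
        (tendsto_id.const_mul_atTop two_pos)).const_mul ((γ / 2) ^ j / j.factorial)
  refine (hexp.atTop_add hpoly.neg).congr fun L => ?_
  rw [mul_sub, Finset.mul_sum, ← exp_add, ← sub_eq_add_neg]
  congr 1
  · ring_nf
  · refine Finset.sum_congr rfl fun j _ => ?_
    rw [show (γ / 2) ^ j / j.factorial * ((2 * L) ^ j * exp (-(2 * L)))
        = (γ / 2 * (2 * L)) ^ j / j.factorial * exp (-(2 * L)) by
          rw [mul_pow (γ / 2) (2 * L)]; ring,
      show γ / 2 * (2 * L) = γ * L by ring]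
    ring

lemma tendsto_integral_Phi_moserFun {α T : ℝ} (j₀ : ℕ) (hα : 0 < α) (hj : j₀ ≠ 0)
    (hT : 4 * π / α < T) :
    Tendsto (fun L => ∫ x, Phi α j₀ ((√(T / (2 * π * L)) • moserFun L) x)) atTop atTop := by
  have hT0 : 0 < T := (by positivity : 0 < 4 * π / α).trans hT
  set γ := α * T / (2 * π) with hγdef
  have hγ : 2 < γ := by
    rw [div_lt_iff₀ hα] at hT
    rw [lt_div_iff₀ (by positivity)]
    linarith
  refine tendsto_atTop_mono' _ ?_ ((tendsto_exp_neg_mul_sub_sum hγ j₀).const_mul_atTop pi_pos)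
  filter_upwards [eventually_gt_atTop 0] with L hL
  have hsq : α * (√(T / (2 * π * L)) * L) ^ 2 = γ * L := by
    rw [mul_pow, sq_sqrt (by positivity), hγdef]
    field_simp
  calc π * (exp (-(2 * L)) * (exp (γ * L) - ∑ j ∈ Finset.range j₀, (γ * L) ^ j / j.factorial))
      = π * exp (-(2 * L)) * Phi α j₀ (√(T / (2 * π * L)) * L) := by
        rw [Phi_eq_exp_sub_sum, hsq]
        ring
    _ ≤ _ := integral_Phi_moserFun_ge hα.le hj hL.le _

/-- Theorem 1.2, supercritical case: for `p ∈ (1,2)` and `α > 4π` the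
supremum of `∫ Φ_{α,j₀}(u)` over Lipschitz compactly supported `u` with `‖u‖ ≤ 1` is `+∞`. -/
theorem stmt_1 (p α : ℝ) (hp1 : 1 < p) (hp2 : p < 2) (hα : 4 * π < α) :
    ∀ K : ℝ, 0 < K → ∃ u : R2 → ℝ, (∃ L : NNReal, LipschitzWith L u) ∧ HasCompactSupport u ∧
      sobNorm p u ≤ 1 ∧ K ≤ ∫ x, Phi α (jzero p) (u x) := by
  intro K _
  have hα0 : 0 < α := by linarith [pi_pos]
  obtain ⟨T, hT, hT1⟩ := exists_between ((div_lt_one hα0).2 hα)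
  have hj : jzero p ≠ 0 := (Nat.ceil_pos.2 (div_pos (by linarith) (by linarith))).ne'
  obtain ⟨L, hL, hnorm, hK⟩ := ((eventually_gt_atTop 0).and
    ((eventually_sobNorm_le_one (by linarith) hp2.le hT1).and
      ((tendsto_integral_Phi_moserFun (jzero p) hα0 hj hT).eventually_ge_atTop K))).exists
  exact ⟨_, ⟨_, (lipschitzWith_moserFun L).const_smul _⟩,
    (hasCompactSupport_moserFun hL.le).smul_left, hnorm, hK⟩
end
end

section
/- Let p ∈ (1,2). For every s ∈ [p, +∞) there exists a constant C_s > 0 such that for every smooth compactly supported function u : ℝ² → ℝ one has (∫_{ℝ²}|u|^s dx)^{1/s} ≤ C_s ‖u‖. (Continuity of the embedding E ↪ L^s(ℝ²) for all p ≤ s < +∞.) -/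
open MeasureTheory Real Filter Topology

noncomputable section

open scoped ENNReal NNReal

local notation "μ2" => (volume : Measure R2)

/-- Lyapunov interpolation for Lp norms. -/
private lemma interp_aux {f : R2 → ℝ} (hf : AEMeasurable f μ2)
    {p q r θ : ℝ} (hp : 0 < p) (hq : 0 < q) (hr : 0 < r) (hθ : 0 < θ) (hθ1 : θ < 1)
    (h : 1/r = θ/p + (1-θ)/q) :
    eLpNorm f (ENNReal.ofReal r) μ2 ≤
      eLpNorm f (ENNReal.ofReal p) μ2 ^ θ * eLpNorm f (ENNReal.ofReal q) μ2 ^ (1-θ) := by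
  have hθ1' : (0:ℝ) < 1 - θ := by linarith
  have hpqr : 1 / ENNReal.ofReal r
      = 1 / ENNReal.ofReal (p/θ) + 1 / ENNReal.ofReal (q/(1-θ)) := by
    rw [one_div, one_div, one_div, ← ENNReal.ofReal_inv_of_pos hr,
      ← ENNReal.ofReal_inv_of_pos (by positivity), ← ENNReal.ofReal_inv_of_pos (by positivity),
      ← ENNReal.ofReal_add (by positivity) (by positivity)]
    congr 1
    rw [inv_div, inv_div, ← one_div, h]
  have key : eLpNorm f (ENNReal.ofReal r) μ2
      = eLpNorm ((fun x => ‖f x‖ ^ θ) • fun x => ‖f x‖ ^ (1-θ)) (ENNReal.ofReal r) μ2 := by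
    rw [← eLpNorm_norm f]
    refine eLpNorm_congr_ae (Filter.Eventually.of_forall fun x => ?_)
    have h2 := Real.rpow_add' (norm_nonneg (f x)) (show θ + (1-θ) ≠ 0 by norm_num)
    simp only [Pi.smul_apply', smul_eq_mul]
    rw [← h2]
    norm_num
  rw [key]
  refine le_trans (eLpNorm_smul_le_mul_eLpNorm ((hf.norm.pow_const _).aestronglyMeasurable)
    ((hf.norm.pow_const _).aestronglyMeasurable) (hpqr := ⟨by simpa only [one_div] using hpqr.symm⟩)) ?_
  rw [eLpNorm_norm_rpow f hθ, eLpNorm_norm_rpow f hθ1', ← ENNReal.ofReal_mul (by positivity),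
    ← ENNReal.ofReal_mul (by positivity), div_mul_cancel₀ _ (ne_of_gt hθ),
    div_mul_cancel₀ _ (ne_of_gt hθ1')]

private lemma mem_aux {u : R2 → ℝ} (hu : ContDiff ℝ (⊤ : ℕ∞) u) (hsupp : HasCompactSupport u)
    (q : ℝ≥0∞) : MemLp u q μ2 :=
  hu.continuous.memLp_of_hasCompactSupport hsupp

private lemma memD_aux {u : R2 → ℝ} (hu : ContDiff ℝ (⊤ : ℕ∞) u) (hsupp : HasCompactSupport u)
    (q : ℝ≥0∞) : MemLp (fderiv ℝ u) q μ2 :=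
  (hu.continuous_fderiv (by simp)).memLp_of_hasCompactSupport (hsupp.fderiv ℝ)

/-- The one-step Moser-type inequality coming from GNS + Hölder. -/
private lemma step_aux {p : ℝ} (hp1 : 1 < p) (hp2 : p < 2) (n : ℕ) (hn : 1 ≤ n)
    {u : R2 → ℝ} (hu : ContDiff ℝ (⊤ : ℕ∞) u) (hsupp : HasCompactSupport u) :
    eLpNorm u (ENNReal.ofReal (2*p/(2-p) * ((n:ℝ)+1))) μ2 ^ ((n:ℝ)+1) ≤
      ((n:ℝ≥0∞)+1) * (SNormLESNormFDerivOfEqConst ℝ μ2 ((p.toNNReal : NNReal) : ℝ) : ℝ≥0∞)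
        * eLpNorm u (ENNReal.ofReal (2*p/(2-p) * (n:ℝ))) μ2 ^ (n:ℝ)
        * eLpNorm (fderiv ℝ u) 2 μ2 := by
  have h2p : (0:ℝ) < 2 - p := by linarith
  have hp0 : (0:ℝ) < p := by linarith
  set q' : ℝ := 2*p/(2-p) with hq'def
  have hq' : 0 < q' := by positivity
  have hn' : (0:ℝ) < n := by exact_mod_cast hn
  -- the function v = u^(n+1)
  set v : R2 → ℝ := fun x => u x ^ (n+1) with hvdef
  have hv : ContDiff ℝ 1 v := (hu.of_le (by exact_mod_cast le_top)).pow (n+1)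
  have h2v : HasCompactSupport v :=
    hsupp.comp_left (g := fun t : ℝ => t ^ (n+1)) (by simp)
  -- GNS
  have hGNS := eLpNorm_le_eLpNorm_fderiv_of_eq (u := v) μ2 hv h2v
      (p := p.toNNReal) (p' := q'.toNNReal)
      (by simp [Real.one_le_toNNReal]; linarith) (by simp)
      (by
        rw [Real.coe_toNNReal _ hq'.le, NNReal.coe_inv, Real.coe_toNNReal _ hp0.le,
          show Module.finrank ℝ R2 = 2 by simp, hq'def]
        push_cast
        rw [inv_div]
        field_simp)
  rw [show ((q'.toNNReal : NNReal) : ℝ≥0∞) = ENNReal.ofReal q' from rfl,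
      show ((p.toNNReal : NNReal) : ℝ≥0∞) = ENNReal.ofReal p from rfl] at hGNS
  -- rewrite the LHS of GNS
  have hL : eLpNorm v (ENNReal.ofReal q') μ2
      = eLpNorm u (ENNReal.ofReal (q' * ((n:ℝ)+1))) μ2 ^ ((n:ℝ)+1) := by
    have e1 : eLpNorm v (ENNReal.ofReal q') μ2
        = eLpNorm (fun x => ‖u x‖ ^ ((n:ℝ)+1)) (ENNReal.ofReal q') μ2 := by
      rw [← eLpNorm_norm v]
      refine eLpNorm_congr_ae (Filter.Eventually.of_forall fun x => ?_)
      rw [hvdef]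
      simp only [norm_pow]
      rw [← Real.rpow_natCast ‖u x‖ (n+1)]
      norm_num
    rw [e1, eLpNorm_norm_rpow u (by positivity), ← ENNReal.ofReal_mul hq'.le]
  -- rewrite the fderiv of v
  have hfd : (fun x => fderiv ℝ v x)
      = fun x => (((n:ℝ)+1) * u x ^ n) • fderiv ℝ u x := by
    funext x
    have h1 : fderiv ℝ (fun y : R2 => u y ^ (n+1)) x
        = ((((n+1:ℕ)):ℝ) * u x ^ (n+1-1)) • fderiv ℝ u x :=
      ((hasDerivAt_pow (n+1) (u x)).comp_hasFDerivAt x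
        ((hu.differentiable (by simp)) x).hasFDerivAt).fderiv
    simp only [hvdef]
    rw [h1]
    simp only [Nat.add_sub_cancel]
    push_cast
    ring_nf
  -- Hölder on the derivative term
  have hpqr : 1 / ENNReal.ofReal p = 1 / ENNReal.ofReal q' + 1 / (2:ℝ≥0∞) := by
    rw [show (2:ℝ≥0∞) = ENNReal.ofReal 2 by norm_num]
    rw [one_div, one_div, one_div, ← ENNReal.ofReal_inv_of_pos hp0,
      ← ENNReal.ofReal_inv_of_pos hq', ← ENNReal.ofReal_inv_of_pos (by norm_num),
      ← ENNReal.ofReal_add (by positivity) (by positivity)]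
    congr 1
    rw [hq'def]
    field_simp
    ring
  have hHold : eLpNorm ((fun x => u x ^ n) • fun x => fderiv ℝ u x) (ENNReal.ofReal p) μ2
      ≤ eLpNorm (fun x => u x ^ n) (ENNReal.ofReal q') μ2 * eLpNorm (fderiv ℝ u) 2 μ2 :=
    eLpNorm_smul_le_mul_eLpNorm
      (memD_aux hu hsupp 2).aestronglyMeasurable
      (hu.continuous.pow n).aestronglyMeasurable (hpqr := ⟨by simpa only [one_div] using hpqr.symm⟩)
  have hpow : eLpNorm (fun x => u x ^ n) (ENNReal.ofReal q') μ2
      = eLpNorm u (ENNReal.ofReal (q' * (n:ℝ))) μ2 ^ (n:ℝ) := by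
    have e1 : eLpNorm (fun x => u x ^ n) (ENNReal.ofReal q') μ2
        = eLpNorm (fun x => ‖u x‖ ^ (n:ℝ)) (ENNReal.ofReal q') μ2 := by
      rw [← eLpNorm_norm (fun x => u x ^ n)]
      refine eLpNorm_congr_ae (Filter.Eventually.of_forall fun x => ?_)
      simp only [norm_pow]
      rw [← Real.rpow_natCast ‖u x‖ n]
    rw [e1, eLpNorm_norm_rpow u hn', ← ENNReal.ofReal_mul hq'.le]
  -- assemble
  have hD : eLpNorm (fderiv ℝ v) (ENNReal.ofReal p) μ2
      ≤ ((n:ℝ≥0∞)+1) * (eLpNorm u (ENNReal.ofReal (q' * (n:ℝ))) μ2 ^ (n:ℝ)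
          * eLpNorm (fderiv ℝ u) 2 μ2) := by
    have e2 : (fun x => fderiv ℝ v x)
        = (((n:ℝ)+1) • ((fun x => u x ^ n) • fun x => fderiv ℝ u x)) := by
      rw [hfd]; funext x; simp [mul_smul]
    calc eLpNorm (fderiv ℝ v) (ENNReal.ofReal p) μ2
        = eLpNorm (((n:ℝ)+1) • ((fun x => u x ^ n) • fun x => fderiv ℝ u x))
            (ENNReal.ofReal p) μ2 := by rw [← e2]
      _ = (‖(n:ℝ)+1‖₊ : ℝ≥0∞) * eLpNorm ((fun x => u x ^ n) • fun x => fderiv ℝ u x)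
            (ENNReal.ofReal p) μ2 := by
          rw [eLpNorm_const_smul (𝕜 := ℝ) ((n:ℝ)+1) (((fun x => u x ^ n) • fun x => fderiv ℝ u x) : R2 → _)]
          rfl
      _ ≤ ((n:ℝ≥0∞)+1) * (eLpNorm u (ENNReal.ofReal (q' * (n:ℝ))) μ2 ^ (n:ℝ)
            * eLpNorm (fderiv ℝ u) 2 μ2) := by
          rw [← hpow]
          refine mul_le_mul' (le_of_eq ?_) hHold
          have h3 : ((n:ℝ)+1) = ((n+1:ℕ):ℝ) := by push_cast; ring
          rw [h3, nnnorm_natCast]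
          push_cast
          ring
  calc eLpNorm u (ENNReal.ofReal (q' * ((n:ℝ)+1))) μ2 ^ ((n:ℝ)+1)
      = eLpNorm v (ENNReal.ofReal q') μ2 := hL.symm
    _ ≤ (SNormLESNormFDerivOfEqConst ℝ μ2 ((p.toNNReal : NNReal) : ℝ) : ℝ≥0∞)
          * eLpNorm (fderiv ℝ v) (ENNReal.ofReal p) μ2 := hGNS
    _ ≤ (SNormLESNormFDerivOfEqConst ℝ μ2 ((p.toNNReal : NNReal) : ℝ) : ℝ≥0∞)
          * (((n:ℝ≥0∞)+1) * (eLpNorm u (ENNReal.ofReal (q' * (n:ℝ))) μ2 ^ (n:ℝ)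
            * eLpNorm (fderiv ℝ u) 2 μ2)) := by gcongr
    _ = ((n:ℝ≥0∞)+1) * (SNormLESNormFDerivOfEqConst ℝ μ2 ((p.toNNReal : NNReal) : ℝ) : ℝ≥0∞)
          * eLpNorm u (ENNReal.ofReal (q' * (n:ℝ))) μ2 ^ (n:ℝ)
          * eLpNorm (fderiv ℝ u) 2 μ2 := by ring

/-- Iterated bound: `‖u‖_{p* n} ≤ C (‖∇u‖₂ + ‖u‖_p)` for all `n ≥ 2`. -/
private lemma master_aux {p : ℝ} (hp1 : 1 < p) (hp2 : p < 2) :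
    ∀ n : ℕ, 2 ≤ n → ∃ C : ℝ≥0∞, 1 ≤ C ∧ C ≠ ⊤ ∧
      ∀ u : R2 → ℝ, ContDiff ℝ (⊤ : ℕ∞) u → HasCompactSupport u →
        eLpNorm u (ENNReal.ofReal (2*p/(2-p) * (n:ℝ))) μ2 ≤
          C * (eLpNorm (fderiv ℝ u) 2 μ2 + eLpNorm u (ENNReal.ofReal p) μ2) := by
  have h2p : (0:ℝ) < 2 - p := by linarith
  have hp0 : (0:ℝ) < p := by linarith
  set q' : ℝ := 2*p/(2-p) with hq'def
  have hq' : 0 < q' := by positivity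
  set K : ℝ≥0∞ := (SNormLESNormFDerivOfEqConst ℝ μ2 ((p.toNNReal : NNReal) : ℝ) : ℝ≥0∞)
    with hKdef
  have hK_top : K ≠ ⊤ := ENNReal.coe_ne_top
  intro n hn
  induction n, hn using Nat.le_induction with
  | base =>
    -- base case n = 2, with absorption via interpolation
    set θ : ℝ := (2-p)/(2+p) with hθdef
    have hθ0 : 0 < θ := by positivity
    have hθ1 : θ < 1 := by
      rw [hθdef, div_lt_one (by linarith)]; linarith
    refine ⟨1 + ((2:ℝ≥0∞) * K) ^ (1/(1+θ)), le_add_right le_rfl, ?_, ?_⟩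
    · refine ENNReal.add_ne_top.2 ⟨ENNReal.one_ne_top, ?_⟩
      exact ENNReal.rpow_ne_top_of_nonneg (by positivity) (ENNReal.mul_ne_top (by norm_num) hK_top)
    intro u hu hsupp
    set A : ℝ≥0∞ := eLpNorm (fderiv ℝ u) 2 μ2 with hAdef
    set B : ℝ≥0∞ := eLpNorm u (ENNReal.ofReal p) μ2 with hBdef
    set x : ℝ≥0∞ := eLpNorm u (ENNReal.ofReal (q' * (2:ℝ))) μ2 with hxdef
    have hA_top : A ≠ ⊤ := (memD_aux hu hsupp 2).2.ne
    have hB_top : B ≠ ⊤ := (mem_aux hu hsupp _).2.ne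
    have hx_top : x ≠ ⊤ := (mem_aux hu hsupp _).2.ne
    show x ≤ _
    by_cases hx0 : x = 0
    · rw [hx0]; exact bot_le
    have hstep := step_aux hp1 hp2 1 le_rfl hu hsupp
    norm_num [-Real.coe_toNNReal'] at hstep
    -- hstep : eLpNorm u (ofReal (q' * 2)) ^ 2 ≤ 2 * K * eLpNorm u (ofReal q') * A
    have hinterp : eLpNorm u (ENNReal.ofReal q') μ2 ≤ B ^ θ * x ^ (1-θ) := by
      refine interp_aux hu.continuous.aemeasurable hp0 (by positivity) hq' hθ0 hθ1 ?_
      rw [hθdef, hq'def]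
      field_simp
      ring
    have habs : x ^ ((1:ℝ)+θ) ≤ 2 * K * B ^ θ * A := by
      have hxne : x ^ ((1:ℝ)-θ) ≠ 0 := (ENNReal.rpow_pos (pos_iff_ne_zero.2 hx0) hx_top).ne'
      have hxnt : x ^ ((1:ℝ)-θ) ≠ ⊤ := ENNReal.rpow_ne_top_of_nonneg (by linarith) hx_top
      refine (ENNReal.mul_le_mul_iff_left hxne hxnt).1 ?_
      rw [← ENNReal.rpow_add_of_nonneg (x := x) _ _ (by linarith) (by linarith),
        show (1:ℝ)+θ+(1-θ) = 2 by ring]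
      calc x ^ (2:ℝ) = x ^ (2:ℕ) := by rw [← ENNReal.rpow_natCast x 2]; norm_num
        _ ≤ 2 * K * eLpNorm u (ENNReal.ofReal q') μ2 * A := hstep
        _ ≤ 2 * K * (B ^ θ * x ^ (1-θ)) * A := by gcongr
        _ = 2 * K * B ^ θ * A * x ^ (1-θ) := by ring
    have habs2 : x ^ ((1:ℝ)+θ) ≤ (2 * K) * (A+B) ^ ((1:ℝ)+θ) := by
      calc x ^ ((1:ℝ)+θ) ≤ 2 * K * B ^ θ * A := habs
        _ ≤ 2 * K * (A+B) ^ θ * (A+B) ^ (1:ℝ) := by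
            refine mul_le_mul' (mul_le_mul' le_rfl
              (ENNReal.rpow_le_rpow le_add_self hθ0.le)) ?_
            rw [ENNReal.rpow_one]; exact le_self_add
        _ = (2 * K) * (A+B) ^ (θ+1) := by
            rw [mul_assoc, ← ENNReal.rpow_add_of_nonneg (x := A+B) _ _ (by linarith) (by norm_num)]
        _ = (2 * K) * (A+B) ^ ((1:ℝ)+θ) := by rw [add_comm θ 1]
    have h1θ : (0:ℝ) < 1 + θ := by linarith
    have hx_le : x ≤ ((2:ℝ≥0∞) * K) ^ (1/(1+θ)) * (A+B) := by
      have := ENNReal.rpow_le_rpow habs2 (le_of_lt (by positivity : (0:ℝ) < 1/(1+θ)))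
      rw [ENNReal.mul_rpow_of_nonneg _ _ (by positivity), ← ENNReal.rpow_mul (A+B),
        mul_one_div, div_self (ne_of_gt h1θ), ENNReal.rpow_one] at this
      calc x = (x ^ ((1:ℝ)+θ)) ^ (1/(1+θ)) := by
            rw [← ENNReal.rpow_mul, mul_one_div, div_self (ne_of_gt h1θ), ENNReal.rpow_one]
        _ ≤ _ := this
    calc x ≤ ((2:ℝ≥0∞) * K) ^ (1/(1+θ)) * (A+B) := hx_le
      _ ≤ (1 + ((2:ℝ≥0∞) * K) ^ (1/(1+θ))) * (A+B) := mul_le_mul' le_add_self le_rfl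
  | succ n hn ih =>
    obtain ⟨C, hC1, hC_top, hCb⟩ := ih
    have hn1 : (1:ℕ) ≤ n := le_trans (by norm_num) hn
    refine ⟨1 + (((n:ℝ≥0∞)+1) * K * C ^ (n:ℝ)) ^ (1/((n:ℝ)+1)), le_add_right le_rfl, ?_, ?_⟩
    · refine ENNReal.add_ne_top.2 ⟨ENNReal.one_ne_top, ?_⟩
      refine ENNReal.rpow_ne_top_of_nonneg (by positivity) ?_
      exact ENNReal.mul_ne_top (ENNReal.mul_ne_top (by simp) hK_top)
        (ENNReal.rpow_ne_top_of_nonneg (by positivity) hC_top)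
    intro u hu hsupp
    set A : ℝ≥0∞ := eLpNorm (fderiv ℝ u) 2 μ2 with hAdef
    set B : ℝ≥0∞ := eLpNorm u (ENNReal.ofReal p) μ2 with hBdef
    have hstep := step_aux hp1 hp2 n hn1 hu hsupp
    have hbn := hCb u hu hsupp
    have hkey : eLpNorm u (ENNReal.ofReal (q' * ((n:ℝ)+1))) μ2 ^ ((n:ℝ)+1)
        ≤ (((n:ℝ≥0∞)+1) * K * C ^ (n:ℝ)) * (A+B) ^ ((n:ℝ)+1) := by
      calc eLpNorm u (ENNReal.ofReal (q' * ((n:ℝ)+1))) μ2 ^ ((n:ℝ)+1)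
          ≤ ((n:ℝ≥0∞)+1) * K * eLpNorm u (ENNReal.ofReal (q' * (n:ℝ))) μ2 ^ (n:ℝ) * A :=
            hstep
        _ ≤ ((n:ℝ≥0∞)+1) * K * (C * (A+B)) ^ (n:ℝ) * ((A+B) ^ (1:ℝ)) := by
            refine mul_le_mul' (mul_le_mul' le_rfl
              (ENNReal.rpow_le_rpow hbn (by positivity))) ?_
            rw [ENNReal.rpow_one]; exact le_self_add
        _ = (((n:ℝ≥0∞)+1) * K * C ^ (n:ℝ)) * ((A+B) ^ (n:ℝ) * (A+B) ^ (1:ℝ)) := by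
            rw [ENNReal.mul_rpow_of_nonneg _ _ (by positivity : (0:ℝ) ≤ (n:ℝ))]
            ring
        _ = (((n:ℝ≥0∞)+1) * K * C ^ (n:ℝ)) * (A+B) ^ ((n:ℝ)+1) := by
            rw [← ENNReal.rpow_add_of_nonneg (x := A+B) _ _ (by positivity) (by norm_num)]
    have hn1' : (0:ℝ) < (n:ℝ)+1 := by positivity
    have hfinal : eLpNorm u (ENNReal.ofReal (q' * ((n:ℝ)+1))) μ2
        ≤ ((((n:ℝ≥0∞)+1) * K * C ^ (n:ℝ)) ^ (1/((n:ℝ)+1))) * (A+B) := by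
      have := ENNReal.rpow_le_rpow hkey (le_of_lt (by positivity : (0:ℝ) < 1/((n:ℝ)+1)))
      rw [ENNReal.mul_rpow_of_nonneg _ _ (by positivity), ← ENNReal.rpow_mul (A+B),
        mul_one_div, div_self (ne_of_gt hn1'), ENNReal.rpow_one] at this
      calc eLpNorm u (ENNReal.ofReal (q' * ((n:ℝ)+1))) μ2
          = (eLpNorm u (ENNReal.ofReal (q' * ((n:ℝ)+1))) μ2 ^ ((n:ℝ)+1)) ^ (1/((n:ℝ)+1)) := by
            rw [← ENNReal.rpow_mul, mul_one_div, div_self (ne_of_gt hn1'), ENNReal.rpow_one]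
        _ ≤ _ := this
    have hcast : ((n+1:ℕ):ℝ) = (n:ℝ)+1 := by push_cast; ring
    rw [hcast]
    calc eLpNorm u (ENNReal.ofReal (q' * ((n:ℝ)+1))) μ2
        ≤ ((((n:ℝ≥0∞)+1) * K * C ^ (n:ℝ)) ^ (1/((n:ℝ)+1))) * (A+B) := hfinal
      _ ≤ (1 + (((n:ℝ≥0∞)+1) * K * C ^ (n:ℝ)) ^ (1/((n:ℝ)+1))) * (A+B) :=
          mul_le_mul' le_add_self le_rfl

private lemma masterS_aux {p : ℝ} (hp1 : 1 < p) (hp2 : p < 2) (s : ℝ) (hs : p ≤ s) :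
    ∃ C : ℝ≥0∞, 1 ≤ C ∧ C ≠ ⊤ ∧
      ∀ u : R2 → ℝ, ContDiff ℝ (⊤ : ℕ∞) u → HasCompactSupport u →
        eLpNorm u (ENNReal.ofReal s) μ2 ≤
          C * (eLpNorm (fderiv ℝ u) 2 μ2 + eLpNorm u (ENNReal.ofReal p) μ2) := by
  have h2p : (0:ℝ) < 2 - p := by linarith
  have hp0 : (0:ℝ) < p := by linarith
  have hs0 : (0:ℝ) < s := lt_of_lt_of_le hp0 hs
  set q' : ℝ := 2*p/(2-p) with hq'def
  have hq' : 0 < q' := by positivity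
  obtain ⟨n₀, hn₀⟩ := exists_nat_gt (s/q')
  set n : ℕ := max n₀ 2 with hndef
  have hn2 : 2 ≤ n := le_max_right _ _
  have hsn : s < q' * n := by
    rw [← div_lt_iff₀' hq']
    exact lt_of_lt_of_le hn₀ (by exact_mod_cast le_max_left n₀ 2)
  have hqn : (0:ℝ) < q' * n := lt_trans hs0 hsn
  obtain ⟨C, hC1, hC_top, hCb⟩ := master_aux hp1 hp2 n hn2
  rcases eq_or_lt_of_le hs with hsp | hsp
  · refine ⟨C, hC1, hC_top, fun u hu hsupp => ?_⟩
    rw [← hsp]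
    calc eLpNorm u (ENNReal.ofReal p) μ2
        ≤ eLpNorm (fderiv ℝ u) 2 μ2 + eLpNorm u (ENNReal.ofReal p) μ2 := le_add_self
      _ = 1 * (eLpNorm (fderiv ℝ u) 2 μ2 + eLpNorm u (ENNReal.ofReal p) μ2) := (one_mul _).symm
      _ ≤ C * (eLpNorm (fderiv ℝ u) 2 μ2 + eLpNorm u (ENNReal.ofReal p) μ2) := by gcongr
  · -- p < s < q' * n : interpolate
    set θ : ℝ := (1/s - 1/(q'*n)) / (1/p - 1/(q'*n)) with hθdef
    have hba : 1/(q'*n) < 1/s := by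
      apply one_div_lt_one_div_of_lt hs0 hsn
    have hta : 1/s < 1/p := by
      apply one_div_lt_one_div_of_lt hp0 hsp
    have hd0 : 0 < 1/p - 1/(q'*n) := by linarith
    have hθ0 : 0 < θ := div_pos (by linarith) hd0
    have hθ1 : θ < 1 := by
      rw [hθdef, div_lt_one hd0]; linarith
    have hid : 1/s = θ/p + (1-θ)/(q'*n) := by
      have h1 : θ * (1/p - 1/(q'*n)) = 1/s - 1/(q'*n) :=
        div_mul_cancel₀ _ (ne_of_gt hd0)
      rw [div_eq_mul_inv θ p, div_eq_mul_inv (1-θ) (q'*n), ← one_div, ← one_div]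
      nlinarith [h1]
    refine ⟨C ^ (1-θ) + 1, le_add_self, ?_, ?_⟩
    · exact ENNReal.add_ne_top.2 ⟨ENNReal.rpow_ne_top_of_nonneg (by linarith) hC_top,
        ENNReal.one_ne_top⟩
    intro u hu hsupp
    set A : ℝ≥0∞ := eLpNorm (fderiv ℝ u) 2 μ2 with hAdef
    set B : ℝ≥0∞ := eLpNorm u (ENNReal.ofReal p) μ2 with hBdef
    have hbn := hCb u hu hsupp
    have hinterp := interp_aux hu.continuous.aemeasurable hp0 hqn hs0 hθ0 hθ1 hid
    calc eLpNorm u (ENNReal.ofReal s) μ2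
        ≤ B ^ θ * eLpNorm u (ENNReal.ofReal (q'*n)) μ2 ^ (1-θ) := hinterp
      _ ≤ (A+B) ^ θ * (C * (A+B)) ^ (1-θ) :=
          mul_le_mul' (ENNReal.rpow_le_rpow le_add_self hθ0.le)
            (ENNReal.rpow_le_rpow hbn (by linarith))
      _ = C ^ (1-θ) * ((A+B) ^ θ * (A+B) ^ (1-θ)) := by
          rw [ENNReal.mul_rpow_of_nonneg _ _ (by linarith : (0:ℝ) ≤ 1-θ)]
          ring
      _ = C ^ (1-θ) * (A+B) := by
          rw [← ENNReal.rpow_add_of_nonneg (x := A+B) _ _ (by linarith) (by linarith)]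
          norm_num
      _ ≤ (C ^ (1-θ) + 1) * (A+B) := mul_le_mul' le_self_add le_rfl

/-- Lemma 2.1: continuity of the embedding `E ↪ L^s(ℝ²)` for `p ≤ s < ∞`. -/
theorem stmt_2 (p : ℝ) (hp1 : 1 < p) (hp2 : p < 2) :
    ∀ s : ℝ, p ≤ s → ∃ C : ℝ, 0 < C ∧ ∀ u : R2 → ℝ, ContDiff ℝ (⊤ : ℕ∞) u → HasCompactSupport u →
      (∫ x, |u x| ^ s) ^ (1 / s) ≤ C * sobNorm p u := by
  intro s hs
  have hp0 : (0:ℝ) < p := by linarith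
  have hs0 : (0:ℝ) < s := lt_of_lt_of_le hp0 hs
  obtain ⟨C, hC1, hC_top, hCb⟩ := masterS_aux hp1 hp2 s hs
  have hCr1 : (1:ℝ) ≤ C.toReal := by
    rw [← ENNReal.toReal_one]
    exact ENNReal.toReal_mono hC_top hC1
  refine ⟨2 * C.toReal, by linarith, ?_⟩
  intro u hu hsupp
  set A : ℝ≥0∞ := eLpNorm (fderiv ℝ u) 2 μ2 with hAdef
  set B : ℝ≥0∞ := eLpNorm u (ENNReal.ofReal p) μ2 with hBdef
  have hA_mem : MemLp (fderiv ℝ u) 2 μ2 := memD_aux hu hsupp 2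
  have hB_mem : MemLp u (ENNReal.ofReal p) μ2 := mem_aux hu hsupp _
  have hs_mem : MemLp u (ENNReal.ofReal s) μ2 := mem_aux hu hsupp _
  have hA_top : A ≠ ⊤ := hA_mem.2.ne
  have hB_top : B ≠ ⊤ := hB_mem.2.ne
  set I1 : ℝ := ∫ x, ‖fderiv ℝ u x‖ ^ 2 with hI1def
  set I2 : ℝ := ∫ x, |u x| ^ p with hI2def
  have hI1_nonneg : 0 ≤ I1 := integral_nonneg fun x => by positivity
  have hI2_nonneg : 0 ≤ I2 := integral_nonneg fun x => by positivity
  -- LHS identification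
  have hL : (∫ x, |u x| ^ s) ^ (1/s) = (eLpNorm u (ENNReal.ofReal s) μ2).toReal := by
    rw [hs_mem.eLpNorm_eq_integral_rpow_norm (by simp [hs0]) ENNReal.ofReal_ne_top]
    rw [ENNReal.toReal_ofReal (by positivity), ENNReal.toReal_ofReal hs0.le]
    simp only [Real.norm_eq_abs, one_div]
  -- A in terms of I1
  have hA_eq : A.toReal = Real.sqrt I1 := by
    rw [hAdef, hA_mem.eLpNorm_eq_integral_rpow_norm (by norm_num) (by norm_num)]
    rw [ENNReal.toReal_ofReal (by positivity)]
    have h2 : (2:ℝ≥0∞).toReal = (2:ℝ) := by norm_num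
    rw [h2]
    have h3 : (fun x => ‖fderiv ℝ u x‖ ^ (2:ℝ)) = fun x => ‖fderiv ℝ u x‖ ^ (2:ℕ) := by
      funext x
      rw [← Real.rpow_natCast ‖fderiv ℝ u x‖ 2]
      norm_num
    rw [show (∫ x, ‖fderiv ℝ u x‖ ^ (2:ℝ)) = I1 by rw [hI1def]; exact congrArg _ h3]
    rw [Real.sqrt_eq_rpow, one_div]
  -- B in terms of I2
  have hB_eq : B.toReal = I2 ^ (1/p) := by
    rw [hBdef, hB_mem.eLpNorm_eq_integral_rpow_norm (by simp [hp0]) ENNReal.ofReal_ne_top]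
    rw [ENNReal.toReal_ofReal (by positivity), ENNReal.toReal_ofReal hp0.le]
    simp only [Real.norm_eq_abs, one_div]
    rfl
  have hA_le : A.toReal ≤ sobNorm p u := by
    rw [hA_eq, sobNorm]
    exact Real.sqrt_le_sqrt (le_add_of_nonneg_right (by positivity))
  have hB_le : B.toReal ≤ sobNorm p u := by
    rw [hB_eq, sobNorm]
    have h1 : I2 ^ (1/p) = Real.sqrt (I2 ^ (2/p)) := by
      rw [Real.sqrt_eq_rpow, ← Real.rpow_mul hI2_nonneg,
        show 2/p * (1/2) = 1/p by ring]
    rw [h1]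
    exact Real.sqrt_le_sqrt (le_add_of_nonneg_left hI1_nonneg)
  have hsob : 0 ≤ sobNorm p u := Real.sqrt_nonneg _
  rw [hL]
  calc (eLpNorm u (ENNReal.ofReal s) μ2).toReal
      ≤ (C * (A + B)).toReal := by
        refine ENNReal.toReal_mono ?_ (hCb u hu hsupp)
        exact ENNReal.mul_ne_top hC_top (ENNReal.add_ne_top.2 ⟨hA_top, hB_top⟩)
    _ = C.toReal * (A.toReal + B.toReal) := by
        rw [ENNReal.toReal_mul, ENNReal.toReal_add hA_top hB_top]
    _ ≤ C.toReal * (sobNorm p u + sobNorm p u) := by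
        refine mul_le_mul_of_nonneg_left (by linarith) (by linarith)
    _ = 2 * C.toReal * sobNorm p u := by ring
end
end

section
/- Let p ∈ (1,2) and let f : ℝ → ℝ be continuous with f(t) = 0 for t ≤ 0, satisfying (f₁)–(f₄) and critical exponential growth with exponent α₀ > 0. Let (u_n) be a sequence of smooth compactly supported functions on ℝ² with sup_n ‖u_n‖ < +∞, converging almost everywhere on ℝ² to a measurable function u, and suppose there is K₀ ∈ (0,+∞) with ∫_{ℝ²} f(u_n(x)) u_n(x) dx ≤ K₀ for all n. Then there is a subsequence (u_{n_k}) such that for every compact set Ω ⊂ ℝ² one has ∫_Ω F(u_{n_k}(x)) dx → ∫_Ω F(u(x)) dx as k → ∞. -/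
open MeasureTheory Real Filter Topology

set_option maxHeartbeats 1000000

noncomputable section

/-- Auxiliary Vitali-type convergence lemma: if `F` is continuous, vanishes on `(-∞,0]`,
`W ≥ 0` is a continuous "weight" with uniformly bounded integrals along the sequence,
and `|F t - F (min t T)| ≤ (1/T) W t` for all large `T`, then `∫_Ω F(w n) → ∫_Ω F(v)`
on every compact `Ω`. -/
lemma aux_main (F W : ℝ → ℝ) (hFc : Continuous F) (hF0 : ∀ t ≤ (0:ℝ), F t = 0)
    (hWc : Continuous W) (hW0 : ∀ t, 0 ≤ W t)
    (w : ℕ → R2 → ℝ) (hwc : ∀ n, Continuous (w n))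
    (v : R2 → ℝ) (hv : Measurable v)
    (hae : ∀ᵐ x : R2, Tendsto (fun n => w n x) atTop (nhds (v x)))
    (hWint : ∀ n, Integrable (fun x => W (w n x)))
    (K : ℝ) (hWbd : ∀ n, (∫ x, W (w n x)) ≤ K)
    (T₁ : ℝ) (hT₁ : 1 ≤ T₁)
    (hdom : ∀ T, T₁ ≤ T → ∀ t, |F t - F (min t T)| ≤ (1 / T) * W t)
    (Ω : Set R2) (hΩ : IsCompact Ω) :
    Tendsto (fun n => ∫ x in Ω, F (w n x)) atTop (nhds (∫ x in Ω, F (v x))) := by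
  have hK0 : 0 ≤ K := le_trans (integral_nonneg fun x => hW0 _) (hWbd 0)
  have hμΩ : volume Ω < ⊤ := hΩ.measure_lt_top
  -- bounds for |F| on (-∞, T]
  have hFbd : ∀ T : ℝ, ∃ C, 0 ≤ C ∧ ∀ t ≤ T, |F t| ≤ C := by
    intro T
    rcases le_or_gt T 0 with hT | hT
    · exact ⟨0, le_rfl, fun t ht => by rw [hF0 t (ht.trans hT), abs_zero]⟩
    · obtain ⟨c, _, hc⟩ := isCompact_Icc.exists_isMaxOn (Set.nonempty_Icc.mpr hT.le)
        ((continuous_abs.comp hFc).continuousOn :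
          ContinuousOn (fun t => |F t|) (Set.Icc 0 T))
      refine ⟨|F c|, abs_nonneg _, fun t ht => ?_⟩
      rcases le_or_gt t 0 with ht0 | ht0
      · rw [hF0 t ht0, abs_zero]; exact abs_nonneg _
      · exact hc ⟨ht0.le, ht⟩
  -- Fatou for W ∘ v
  have hWvm : Measurable fun x => W (v x) := hWc.measurable.comp hv
  have hlin : ∫⁻ x, ENNReal.ofReal (W (v x)) ≤ ENNReal.ofReal K := by
    have hconv : ∀ᵐ x : R2, Tendsto (fun n => ENNReal.ofReal (W (w n x))) atTop
        (nhds (ENNReal.ofReal (W (v x)))) := by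
      filter_upwards [hae] with x hx
      exact (ENNReal.continuous_ofReal.tendsto _).comp ((hWc.tendsto _).comp hx)
    calc ∫⁻ x, ENNReal.ofReal (W (v x))
        = ∫⁻ x, liminf (fun n => ENNReal.ofReal (W (w n x))) atTop := by
          refine lintegral_congr_ae ?_
          filter_upwards [hconv] with x hx
          exact hx.liminf_eq.symm
      _ ≤ liminf (fun n => ∫⁻ x, ENNReal.ofReal (W (w n x))) atTop :=
          lintegral_liminf_le fun n => ((hWc.comp (hwc n)).measurable).ennreal_ofReal
      _ ≤ liminf (fun _ : ℕ => ENNReal.ofReal K) atTop := by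
          refine Filter.liminf_le_liminf (Filter.Eventually.of_forall fun n => ?_)
          rw [← MeasureTheory.ofReal_integral_eq_lintegral_ofReal (hWint n)
            (Filter.Eventually.of_forall fun x => hW0 _)]
          exact ENNReal.ofReal_le_ofReal (hWbd n)
      _ = ENNReal.ofReal K := Filter.liminf_const _
  have hWvlin_res : ∫⁻ x in Ω, ENNReal.ofReal (W (v x)) ≤ ENNReal.ofReal K :=
    le_trans (lintegral_mono' Measure.restrict_le_self le_rfl) hlin
  have hWv_int : IntegrableOn (fun x => W (v x)) Ω := by
    refine ⟨hWvm.aestronglyMeasurable.restrict, ?_⟩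
    rw [hasFiniteIntegral_iff_norm]
    have : ∀ x : R2, ENNReal.ofReal ‖W (v x)‖ = ENNReal.ofReal (W (v x)) := fun x => by
      rw [Real.norm_eq_abs, abs_of_nonneg (hW0 _)]
    simp only [this]
    exact lt_of_le_of_lt hWvlin_res ENNReal.ofReal_lt_top
  have hWv_bd : ∫ x in Ω, W (v x) ≤ K := by
    rw [integral_eq_lintegral_of_nonneg_ae (Filter.Eventually.of_forall fun x => hW0 _)
      hWvm.aestronglyMeasurable.restrict]
    calc (∫⁻ x in Ω, ENNReal.ofReal (W (v x))).toReal
        ≤ (ENNReal.ofReal K).toReal := ENNReal.toReal_mono ENNReal.ofReal_ne_top hWvlin_res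
      _ = K := ENNReal.toReal_ofReal hK0
  have hWn_res_bd : ∀ n, ∫ x in Ω, W (w n x) ≤ K := fun n =>
    le_trans (setIntegral_le_integral (hWint n)
      (Filter.Eventually.of_forall fun x => hW0 _)) (hWbd n)
  -- integrability of F ∘ v on Ω
  obtain ⟨C₁, hC₁0, hC₁⟩ := hFbd T₁
  have hT₁0 : (0:ℝ) < T₁ := lt_of_lt_of_le zero_lt_one hT₁
  have habs : ∀ (T : ℝ) (C : ℝ), (∀ t ≤ T, |F t| ≤ C) → T₁ ≤ T →
      ∀ t : ℝ, |F t| ≤ C + 1 / T * W t := by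
    intro T C hC hT t
    have h1 := hdom T hT t
    have h2 := hC (min t T) (min_le_right _ _)
    calc |F t| = |F (min t T) + (F t - F (min t T))| := by ring_nf
      _ ≤ |F (min t T)| + |F t - F (min t T)| := abs_add_le _ _
      _ ≤ C + 1 / T * W t := add_le_add h2 h1
  have hFv_meas : AEStronglyMeasurable (fun x => F (v x)) (volume.restrict Ω) :=
    (hFc.measurable.comp hv).aestronglyMeasurable.restrict
  have hFv_int : IntegrableOn (fun x => F (v x)) Ω := by
    have hb1 : IntegrableOn (fun _ : R2 => C₁) Ω volume := integrableOn_const hμΩ.ne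
    have hb2 : IntegrableOn (fun x => C₁ + 1 / T₁ * W (v x)) Ω volume :=
      hb1.add (hWv_int.const_mul (1 / T₁))
    refine hb2.mono' hFv_meas (Filter.Eventually.of_forall fun x => ?_)
    rw [Real.norm_eq_abs]
    exact habs T₁ C₁ hC₁ le_rfl (v x)
  have hFn_int : ∀ n, IntegrableOn (fun x => F (w n x)) Ω :=
    fun n => ((hFc.comp (hwc n)).continuousOn).integrableOn_compact hΩ
  -- main estimate
  have hmain : Tendsto (fun n => ∫ x in Ω, |F (w n x) - F (v x)|) atTop (nhds 0) := by
    rw [Metric.tendsto_atTop]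
    intro ε hε
    obtain ⟨T, hTT₁, hT4⟩ : ∃ T : ℝ, T₁ ≤ T ∧ 4 * K / ε < T :=
      ⟨max T₁ (4 * K / ε) + 1, by linarith [le_max_left T₁ (4 * K / ε)],
        by linarith [le_max_right T₁ (4 * K / ε)]⟩
    have hT0 : (0:ℝ) < T := lt_of_lt_of_le hT₁0 hTT₁
    have hTK : 1 / T * K < ε / 4 := by
      have h2 : 4 * K < T * ε := (div_lt_iff₀ hε).mp hT4
      rw [one_div, inv_mul_eq_div, div_lt_iff₀ hT0]
      linarith
    obtain ⟨C, hC0, hC⟩ := hFbd T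
    set G : ℝ → ℝ := fun t => F (min t T) with hG
    have hGc : Continuous G := hFc.comp (continuous_id.min continuous_const)
    have hGbd : ∀ t, |G t| ≤ C := fun t => hC _ (min_le_right _ _)
    have hGn_meas : ∀ n, AEStronglyMeasurable (fun x => |G (w n x) - G (v x)|)
        (volume.restrict Ω) :=
      fun n => (((hGc.comp (hwc n)).measurable.sub
        (hGc.measurable.comp hv)).abs).aestronglyMeasurable.restrict
    have hJ : Tendsto (fun n => ∫ x in Ω, |G (w n x) - G (v x)|) atTop (nhds 0) := by
      have h0 : (0:ℝ) = ∫ (_ : R2) in Ω, (0:ℝ) := by simp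
      rw [h0]
      have hb1 : IntegrableOn (fun _ : R2 => 2 * C) Ω volume := integrableOn_const hμΩ.ne
      refine tendsto_integral_of_dominated_convergence (fun _ => 2 * C) hGn_meas
        hb1 (fun n => Filter.Eventually.of_forall fun x => ?_)
        ?_
      · rw [Real.norm_eq_abs, abs_abs]
        calc |G (w n x) - G (v x)| ≤ |G (w n x)| + |G (v x)| := abs_sub _ _
          _ ≤ 2 * C := by linarith [hGbd (w n x), hGbd (v x)]
      · refine (ae_restrict_of_ae ?_)
        filter_upwards [hae] with x hx
        have h1 : Tendsto (fun n => G (w n x)) atTop (nhds (G (v x))) :=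
          (hGc.tendsto _).comp hx
        have h2 := (h1.sub (tendsto_const_nhds : Tendsto (fun _ : ℕ => G (v x)) atTop _)).abs
        simpa using h2
    obtain ⟨N, hN⟩ := Metric.tendsto_atTop.mp hJ (ε / 4) (by linarith)
    refine ⟨N, fun n hn => ?_⟩
    have hJn : ∫ x in Ω, |G (w n x) - G (v x)| < ε / 4 := by
      have := hN n hn
      rw [Real.dist_eq, sub_zero] at this
      exact lt_of_abs_lt this
    have hpt : ∀ x : R2, |F (w n x) - F (v x)| ≤
        1 / T * W (w n x) + |G (w n x) - G (v x)| + 1 / T * W (v x) := by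
      intro x
      have h1 := hdom T hTT₁ (w n x)
      have h2 := hdom T hTT₁ (v x)
      calc |F (w n x) - F (v x)|
          ≤ |F (w n x) - G (w n x)| + |G (w n x) - F (v x)| := abs_sub_le _ _ _
        _ ≤ |F (w n x) - G (w n x)| + (|G (w n x) - G (v x)| + |G (v x) - F (v x)|) :=
            add_le_add le_rfl (abs_sub_le _ _ _)
        _ ≤ 1 / T * W (w n x) + |G (w n x) - G (v x)| + 1 / T * W (v x) := by
            rw [abs_sub_comm (G (v x)) (F (v x))]
            have := h1
            have := h2
            simp only [hG]
            linarith [h1, h2]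
    have hIntWn : IntegrableOn (fun x => W (w n x)) Ω := (hWint n).integrableOn
    have hIntG : IntegrableOn (fun x => |G (w n x) - G (v x)|) Ω := by
      have hb1 : IntegrableOn (fun _ : R2 => 2 * C) Ω volume := integrableOn_const hμΩ.ne
      refine hb1.mono' (hGn_meas n) (Filter.Eventually.of_forall fun x => ?_)
      rw [Real.norm_eq_abs, abs_abs]
      calc |G (w n x) - G (v x)| ≤ |G (w n x)| + |G (v x)| := abs_sub _ _
        _ ≤ 2 * C := by linarith [hGbd (w n x), hGbd (v x)]
    have hIntD : IntegrableOn (fun x => |F (w n x) - F (v x)|) Ω :=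
      ((hFn_int n).sub hFv_int).abs
    have hcomp : (∫ x in Ω, |F (w n x) - F (v x)|) ≤
        1 / T * (∫ x in Ω, W (w n x)) + (∫ x in Ω, |G (w n x) - G (v x)|)
          + 1 / T * (∫ x in Ω, W (v x)) := by
      have hsum : (∫ x in Ω, |F (w n x) - F (v x)|) ≤
          ∫ x in Ω, (1 / T * W (w n x) + |G (w n x) - G (v x)| + 1 / T * W (v x)) := by
        refine integral_mono hIntD ?_ hpt
        exact ((hIntWn.const_mul (1 / T)).add hIntG).add (hWv_int.const_mul (1 / T))
      calc (∫ x in Ω, |F (w n x) - F (v x)|)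
          ≤ ∫ x in Ω, (1 / T * W (w n x) + |G (w n x) - G (v x)| + 1 / T * W (v x)) := hsum
        _ = (∫ x in Ω, (1 / T * W (w n x) + |G (w n x) - G (v x)|))
              + ∫ x in Ω, 1 / T * W (v x) := by
            have hIA : Integrable (fun x => 1 / T * W (w n x) + |G (w n x) - G (v x)|)
                (volume.restrict Ω) := (hIntWn.const_mul (1 / T)).add hIntG
            rw [integral_add hIA (hWv_int.const_mul (1 / T))]
        _ = 1 / T * (∫ x in Ω, W (w n x)) + (∫ x in Ω, |G (w n x) - G (v x)|)
              + 1 / T * (∫ x in Ω, W (v x)) := by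
            rw [integral_add (hIntWn.const_mul (1 / T)) hIntG, integral_const_mul,
              integral_const_mul]
    have hWnpos : 0 ≤ ∫ x in Ω, W (w n x) := integral_nonneg fun x => hW0 _
    have hb1 : 1 / T * (∫ x in Ω, W (w n x)) ≤ 1 / T * K :=
      mul_le_mul_of_nonneg_left (hWn_res_bd n) (by positivity)
    have hb2 : 1 / T * (∫ x in Ω, W (v x)) ≤ 1 / T * K :=
      mul_le_mul_of_nonneg_left hWv_bd (by positivity)
    have hnn : 0 ≤ ∫ x in Ω, |F (w n x) - F (v x)| := integral_nonneg fun x => abs_nonneg _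
    rw [Real.dist_eq, sub_zero, abs_of_nonneg hnn]
    linarith
  -- conclude
  rw [tendsto_iff_dist_tendsto_zero]
  refine squeeze_zero (fun n => dist_nonneg) (fun n => ?_) hmain
  rw [Real.dist_eq, ← integral_sub (hFn_int n) hFv_int]
  have hnorm := norm_integral_le_integral_norm (μ := volume.restrict Ω)
    (fun x => F (w n x) - F (v x))
  simpa [Real.norm_eq_abs] using hnorm

/-- Lemma 2.4, first conclusion: convergence of `∫_Ω F(u_n)` on compact sets
along a subsequence. -/
theorem stmt_7 (p α₀ : ℝ) (f : ℝ → ℝ) (hp1 : 1 < p) (hp2 : p < 2)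
    (hf : Continuous f) (hf0 : ∀ t ≤ (0:ℝ), f t = 0)
    (hf1 : Tendsto (fun t => f t / t) (nhdsWithin 0 (Set.Ioi 0)) (nhds 0))
    (hf2 : CondF2 f) (hf3 : CondF3 f) (hf4 : CondF4 f α₀)
    (hα₀ : 0 < α₀) (hcrit : CriticalExpGrowth f α₀)
    (u : ℕ → R2 → ℝ) (hu : ∀ n, ContDiff ℝ (⊤ : ℕ∞) (u n) ∧ HasCompactSupport (u n))
    (hbdd : ∃ M : ℝ, ∀ n, sobNorm p (u n) ≤ M)
    (v : R2 → ℝ) (hv : Measurable v)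
    (hae : ∀ᵐ x : R2, Tendsto (fun n => u n x) atTop (nhds (v x)))
    (K₀ : ℝ) (hK₀ : 0 < K₀) (hK : ∀ n, (∫ x, f (u n x) * u n x) ≤ K₀) :
    ∃ φ : ℕ → ℕ, StrictMono φ ∧ ∀ Ω : Set R2, IsCompact Ω →
      Tendsto (fun k => ∫ x in Ω, Fint f (u (φ k) x)) atTop
        (nhds (∫ x in Ω, Fint f (v x))) := by
    classical
  obtain ⟨t₀, ht₀, M₀, hM₀, ϑ, hϑ0, hϑ1, hF3⟩ := hf3
  obtain ⟨M, hM⟩ := hbdd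
  have hp0 : (0:ℝ) < p := lt_trans zero_lt_one hp1
  have hucont : ∀ n, Continuous (u n) := fun n => (hu n).1.continuous
  have hFc : Continuous (Fint f) :=
    intervalIntegral.continuous_primitive (fun a b => hf.intervalIntegrable a b) 0
  have hF0 : ∀ t ≤ (0:ℝ), Fint f t = 0 := by
    intro t ht
    rw [Fint, intervalIntegral.integral_congr (g := fun _ => (0:ℝ))
      (fun s hs => hf0 s (by rw [Set.uIcc_of_ge ht] at hs; exact hs.2)),
      intervalIntegral.integral_zero]
  have hfpos : ∀ t, t₀ < t → 0 < f t := by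
    intro t ht
    by_contra hcon
    push_neg at hcon
    have h1 := (hF3 t ht).1
    have h2 := (hF3 t ht).2
    have : M₀ * f t ≤ 0 := mul_nonpos_of_nonneg_of_nonpos hM₀.le hcon
    linarith
  have hFpos : ∀ t, t₀ < t → 0 < Fint f t := by
    intro t ht
    have hrp : 0 < t ^ ϑ := Real.rpow_pos_of_pos (ht₀.trans ht) ϑ
    have h1 := (hF3 t ht).1
    by_contra hcon
    push_neg at hcon
    have : t ^ ϑ * Fint f t ≤ 0 := mul_nonpos_of_nonneg_of_nonpos hrp.le hcon
    linarith
  -- the constant Cp controlling the negative part of f(t) t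
  obtain ⟨δ, hδ0, hδ⟩ := Metric.tendsto_nhdsWithin_nhds.mp hf1 1 zero_lt_one
  obtain ⟨c, _, hc⟩ := isCompact_Icc.exists_isMaxOn (Set.nonempty_Icc.mpr ht₀.le)
      (((hf.mul continuous_id).abs).continuousOn :
        ContinuousOn (fun t => |f t * t|) (Set.Icc 0 t₀))
  set Mh : ℝ := |f c * c| with hMh
  have hMh0 : 0 ≤ Mh := abs_nonneg _
  set mx : ℝ := (max t₀ 1) ^ ((2:ℝ) - p) with hmx
  have hmx0 : 0 ≤ mx := Real.rpow_nonneg (le_trans zero_le_one (le_max_right _ _)) _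
  have hδp : 0 < δ ^ p := Real.rpow_pos_of_pos hδ0 p
  set Cp : ℝ := max mx (Mh / δ ^ p) with hCp
  have hCp0 : 0 ≤ Cp := le_trans hmx0 (le_max_left _ _)
  have hneg : ∀ t : ℝ, -(f t * t) ≤ Cp * |t| ^ p := by
    intro t
    have hCpnn : 0 ≤ Cp * |t| ^ p :=
      mul_nonneg hCp0 (Real.rpow_nonneg (abs_nonneg t) p)
    rcases le_or_gt t 0 with ht | ht
    · rw [hf0 t ht]
      simpa using hCpnn
    rcases lt_or_ge t₀ t with ht' | ht'
    · have : 0 < f t * t := mul_pos (hfpos t ht') ht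
      linarith
    · rw [abs_of_pos ht]
      have htp0 : 0 ≤ t ^ p := Real.rpow_nonneg ht.le p
      rcases lt_or_ge t δ with hd | hd
      · have h1 : |f t / t| < 1 := by
          have := hδ (Set.mem_Ioi.mpr ht)
            (by rw [Real.dist_eq, sub_zero, abs_of_pos ht]; exact hd)
          rwa [Real.dist_eq, sub_zero] at this
        have h2 : |f t| < t := by
          rw [abs_div, abs_of_pos ht, div_lt_one ht] at h1
          exact h1
        have h3 : -(f t * t) ≤ |f t| * t :=
          by nlinarith [neg_abs_le (f t), abs_nonneg (f t)]
        have h4 : |f t| * t ≤ t * t := by nlinarith [abs_nonneg (f t)]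
        have h5 : t * t = t ^ p * t ^ ((2:ℝ) - p) := by
          rw [← Real.rpow_add ht,
            show p + ((2:ℝ) - p) = ((2:ℕ):ℝ) by push_cast; ring, Real.rpow_natCast]
          ring
        have h6 : t ^ ((2:ℝ) - p) ≤ mx :=
          Real.rpow_le_rpow ht.le (le_trans ht' (le_max_left _ _)) (by linarith)
        calc -(f t * t) ≤ t * t := le_trans h3 h4
          _ = t ^ p * t ^ ((2:ℝ) - p) := h5
          _ ≤ t ^ p * mx := mul_le_mul_of_nonneg_left h6 htp0
          _ ≤ t ^ p * Cp := mul_le_mul_of_nonneg_left (le_max_left _ _) htp0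
          _ = Cp * t ^ p := mul_comm _ _
      · have h1 : -(f t * t) ≤ Mh := by
          have h1a : |f t * t| ≤ Mh := by simpa [hMh] using hc ⟨ht.le, ht'⟩
          linarith [neg_le_abs (f t * t), neg_abs_le (f t * t)]
        have h2 : δ ^ p ≤ t ^ p := Real.rpow_le_rpow hδ0.le hd hp0.le
        calc -(f t * t) ≤ Mh := h1
          _ = Mh / δ ^ p * δ ^ p := by field_simp
          _ ≤ Mh / δ ^ p * t ^ p := mul_le_mul_of_nonneg_left h2 (div_nonneg hMh0 hδp.le)
          _ ≤ Cp * t ^ p := mul_le_mul_of_nonneg_right (le_max_right _ _) htp0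
  -- uniform bound on ∫ |u n|^p
  set KB : ℝ := (M ^ 2) ^ (p / 2) with hKB
  have hKB0 : 0 ≤ KB := Real.rpow_nonneg (sq_nonneg M) _
  have hLp : ∀ n, (∫ x, |u n x| ^ p) ≤ KB := by
    intro n
    have h1 : Real.sqrt ((∫ x, ‖fderiv ℝ (u n) x‖ ^ 2) + (∫ x, |u n x| ^ p) ^ (2 / p)) ≤ M := hM n
    set A : ℝ := ∫ x, ‖fderiv ℝ (u n) x‖ ^ 2 with hA
    set B : ℝ := ∫ x, |u n x| ^ p with hB
    have hA0 : 0 ≤ A := integral_nonneg fun x => sq_nonneg _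
    have hB0 : 0 ≤ B := integral_nonneg fun x => Real.rpow_nonneg (abs_nonneg _) p
    have h2 : 0 ≤ A + B ^ ((2:ℝ) / p) := add_nonneg hA0 (Real.rpow_nonneg hB0 _)
    have hs : A + B ^ ((2:ℝ) / p) ≤ M ^ 2 := by
      nlinarith [Real.sq_sqrt h2, Real.sqrt_nonneg (A + B ^ ((2:ℝ) / p)), h1]
    have h3 : B ^ ((2:ℝ) / p) ≤ M ^ 2 := by linarith
    have hexp : (2 / p) * (p / 2) = (1:ℝ) := by field_simp
    calc B = (B ^ ((2:ℝ) / p)) ^ (p / 2) := by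
          rw [← Real.rpow_mul hB0, hexp, Real.rpow_one]
      _ ≤ (M ^ 2) ^ (p / 2) :=
          Real.rpow_le_rpow (Real.rpow_nonneg hB0 _) h3 (by positivity)
  -- the weight W
  set W : ℝ → ℝ := fun t => M₀ * max (f t * t) 0 with hW
  have hWc : Continuous W :=
    continuous_const.mul ((hf.mul continuous_id).max continuous_const)
  have hW0 : ∀ t, 0 ≤ W t := fun t => mul_nonneg hM₀.le (le_max_right _ _)
  have hint_h : ∀ n, Integrable (fun x => f (u n x) * u n x) := by
    intro n
    have hcs : HasCompactSupport ((fun t => f t * t) ∘ u n) :=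
      (hu n).2.comp_left (by simp [hf0 0 le_rfl])
    exact ((hf.comp (hucont n)).mul (hucont n)).integrable_of_hasCompactSupport hcs
  have hint_p : ∀ n, Integrable (fun x => |u n x| ^ p) := by
    intro n
    have hcs : HasCompactSupport ((fun t => |t| ^ p) ∘ u n) :=
      (hu n).2.comp_left (by simp [Real.zero_rpow (ne_of_gt hp0)])
    have hcont : Continuous (fun x : R2 => |u n x| ^ p) :=
      (continuous_abs.comp (hucont n)).rpow_const (fun x => Or.inr hp0.le)
    exact hcont.integrable_of_hasCompactSupport hcs
  have hint_W : ∀ n, Integrable (fun x => W (u n x)) := fun n =>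
    ((hint_h n).pos_part).const_mul M₀
  set K : ℝ := M₀ * (K₀ + Cp * KB) with hKdef
  have hWbd : ∀ n, (∫ x, W (u n x)) ≤ K := by
    intro n
    have h1 : ∀ x, max (f (u n x) * u n x) 0 ≤ f (u n x) * u n x + Cp * |u n x| ^ p := by
      intro x
      have hx := hneg (u n x)
      have hnn : 0 ≤ Cp * |u n x| ^ p :=
        mul_nonneg hCp0 (Real.rpow_nonneg (abs_nonneg _) p)
      rcases max_cases (f (u n x) * u n x) 0 with ⟨h, _⟩ | ⟨h, _⟩ <;> rw [h] <;> linarith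
    have h2 : (∫ x, max (f (u n x) * u n x) 0) ≤ K₀ + Cp * KB := by
      calc (∫ x, max (f (u n x) * u n x) 0)
          ≤ ∫ x, (f (u n x) * u n x + Cp * |u n x| ^ p) :=
            integral_mono (hint_h n).pos_part
              ((hint_h n).add ((hint_p n).const_mul Cp)) h1
        _ = (∫ x, f (u n x) * u n x) + Cp * ∫ x, |u n x| ^ p := by
            rw [integral_add (hint_h n) ((hint_p n).const_mul Cp), integral_const_mul]
        _ ≤ K₀ + Cp * KB := add_le_add (hK n) (mul_le_mul_of_nonneg_left (hLp n) hCp0)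
    calc (∫ x, W (u n x)) = M₀ * ∫ x, max (f (u n x) * u n x) 0 := integral_const_mul _ _
      _ ≤ K := mul_le_mul_of_nonneg_left h2 hM₀.le
  -- the domination hypothesis
  have hdom : ∀ T, max t₀ 1 + 1 ≤ T → ∀ t,
      |Fint f t - Fint f (min t T)| ≤ (1 / T) * W t := by
    intro T hT t
    have hT1 : (1:ℝ) ≤ T := le_trans (by linarith [le_max_right t₀ (1:ℝ)]) hT
    have hTt₀ : t₀ < T := lt_of_le_of_lt (le_max_left t₀ 1) (by linarith)
    have hT0 : (0:ℝ) < T := by linarith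
    rcases le_or_gt t T with hle | hlt
    · rw [min_eq_left hle, sub_self, abs_zero]
      exact mul_nonneg (by positivity) (hW0 t)
    · rw [min_eq_right hlt.le]
      have htt₀ : t₀ < t := hTt₀.trans hlt
      have hft : 0 < f t := hfpos t htt₀
      have ht0 : 0 < t := lt_trans ht₀ htt₀
      have hFT : 0 < Fint f T := hFpos T hTt₀
      have hsplit : Fint f t - Fint f T = ∫ s in T..t, f s := by
        rw [Fint, Fint, ← intervalIntegral.integral_add_adjacent_intervals
          (hf.intervalIntegrable 0 T) (hf.intervalIntegrable T t)]
        ring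
      have hmono : 0 ≤ Fint f t - Fint f T := by
        rw [hsplit]
        exact intervalIntegral.integral_nonneg hlt.le
          (fun s hs => (hfpos s (lt_of_lt_of_le hTt₀ hs.1)).le)
      have hϑt : (1:ℝ) ≤ t ^ ϑ := Real.one_le_rpow (le_trans hT1 hlt.le) hϑ0
      have hFt0 : 0 < Fint f t := hFpos t htt₀
      have step1 : Fint f t ≤ M₀ * f t :=
        le_trans (le_mul_of_one_le_left hFt0.le hϑt) (hF3 t htt₀).2
      have hWt : W t = M₀ * (f t * t) := by
        simp only [hW]
        rw [max_eq_left (mul_pos hft ht0).le]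
      rw [abs_of_nonneg hmono, hWt]
      have hkey : Fint f t * T ≤ M₀ * (f t * t) := by
        nlinarith [mul_le_mul_of_nonneg_right step1 hT0.le,
          mul_le_mul_of_nonneg_left hlt.le (mul_pos hM₀ hft).le]
      have : Fint f t ≤ M₀ * (f t * t) / T := (le_div_iff₀ hT0).mpr hkey
      rw [one_div, inv_mul_eq_div]
      linarith
  refine ⟨id, strictMono_id, fun Ω hΩ => ?_⟩
  have h1T₁ : (1:ℝ) ≤ max t₀ 1 + 1 := by linarith [le_max_right t₀ (1:ℝ)]
  exact aux_main (Fint f) W hFc hF0 hWc hW0 u hucont v hv hae hint_W K hWbd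
    (max t₀ 1 + 1) h1T₁ hdom Ω hΩ
end
end

section
/- Let p ∈ (1,2) and let f : ℝ → ℝ be continuous with f(t) = 0 for t ≤ 0, satisfying (f₁)–(f₄) and critical exponential growth with exponent α₀ > 0. Let (u_n) be a sequence of smooth compactly supported functions on ℝ² with sup_n ‖u_n‖ < +∞, converging almost everywhere on ℝ² to a measurable function u, and suppose there is K₀ ∈ (0,+∞) with ∫_{ℝ²} f(u_n(x)) u_n(x) dx ≤ K₀ for all n. Then there is a subsequence (u_{n_k}) such that for every smooth compactly supported ψ : ℝ² → ℝ one has ∫_{ℝ²} f(u_{n_k}(x)) ψ(x) dx → ∫_{ℝ²} f(u(x)) ψ(x) dx as k → ∞. -/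
open MeasureTheory Real Filter Topology

noncomputable section

set_option maxHeartbeats 2000000 in
/-- Lemma 2.4, second conclusion: `∫ f(u_n) ψ → ∫ f(u) ψ` for all test
functions `ψ`, along a subsequence. -/
theorem stmt_8 (p α₀ : ℝ) (f : ℝ → ℝ) (hp1 : 1 < p) (hp2 : p < 2)
    (hf : Continuous f) (hf0 : ∀ t ≤ (0:ℝ), f t = 0)
    (hf1 : Tendsto (fun t => f t / t) (nhdsWithin 0 (Set.Ioi 0)) (nhds 0))
    (hf2 : CondF2 f) (hf3 : CondF3 f) (hf4 : CondF4 f α₀)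
    (hα₀ : 0 < α₀) (hcrit : CriticalExpGrowth f α₀)
    (u : ℕ → R2 → ℝ) (hu : ∀ n, ContDiff ℝ (⊤ : ℕ∞) (u n) ∧ HasCompactSupport (u n))
    (hbdd : ∃ M : ℝ, ∀ n, sobNorm p (u n) ≤ M)
    (v : R2 → ℝ) (hv : Measurable v)
    (hae : ∀ᵐ x : R2, Tendsto (fun n => u n x) atTop (nhds (v x)))
    (K₀ : ℝ) (hK₀ : 0 < K₀) (hK : ∀ n, (∫ x, f (u n x) * u n x) ≤ K₀) :
    ∃ φ : ℕ → ℕ, StrictMono φ ∧ ∀ ψ : R2 → ℝ, ContDiff ℝ (⊤ : ℕ∞) ψ → HasCompactSupport ψ →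
      Tendsto (fun k => ∫ x, f (u (φ k) x) * ψ x) atTop
        (nhds (∫ x, f (v x) * ψ x)) := by

  classical
  obtain ⟨t₀, ht₀, M₀, hM₀, ϑ, hϑ0, hϑ1, hf3'⟩ := hf3
  have hp0 : (0:ℝ) < p := by linarith
  -- positivity of f beyond t₀
  have hfpos : ∀ t : ℝ, t₀ < t → 0 < f t := by
    intro t ht
    obtain ⟨h1, h2⟩ := hf3' t ht
    nlinarith
  -- monotonicity beyond t₀
  have hfmono : ∀ s t : ℝ, t₀ < s → s ≤ t → f s ≤ f t := by
    intro s t hs hst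
    rcases eq_or_lt_of_le hst with rfl | hlt
    · exact le_refl _
    · have hs0 : (0:ℝ) < s := lt_trans ht₀ hs
      have ht0 : (0:ℝ) < t := lt_trans hs0 hlt
      have h := hf2 (Set.mem_Ioi.2 hs0) (Set.mem_Ioi.2 ht0) hlt
      have hfs := hfpos s hs
      have h5 : s ^ 5 ≤ t ^ 5 := pow_le_pow_left₀ hs0.le hlt.le 5
      have hs5 : (0:ℝ) < s ^ 5 := by positivity
      have ht5 : (0:ℝ) < t ^ 5 := by positivity
      have h' := (div_lt_div_iff₀ hs5 ht5).1 h
      nlinarith [mul_le_mul_of_nonneg_left h5 hfs.le]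
  -- lower bound : f t * t ≥ -C |t|^p
  obtain ⟨δ, hδ0, hδ⟩ := Metric.tendsto_nhdsWithin_nhds.mp hf1 1 one_pos
  set δ' : ℝ := min (δ / 2) 1 with hδ'def
  have hδ'0 : 0 < δ' := lt_min (by linarith) one_pos
  have hδ'1 : δ' ≤ 1 := min_le_right _ _
  have hδ'δ : δ' < δ := lt_of_le_of_lt (min_le_left _ _) (by linarith)
  obtain ⟨C₀, hC₀⟩ := (isCompact_Icc (a := δ') (b := max t₀ δ')).exists_bound_of_continuousOn
    ((hf.mul continuous_id).continuousOn)
  have hδp : (0:ℝ) < δ' ^ p := Real.rpow_pos_of_pos hδ'0 p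
  set C : ℝ := 1 + max C₀ 0 / δ' ^ p with hCdef
  have hC0 : (0:ℝ) ≤ C := by positivity
  have hC1 : (1:ℝ) ≤ C := by
    have h : (0:ℝ) ≤ max C₀ 0 / δ' ^ p := by positivity
    rw [hCdef]; linarith
  clear_value C
  have hCg : ∀ t : ℝ, 0 ≤ f t * t + C * |t| ^ p := by
    intro t
    have habs : (0:ℝ) ≤ |t| ^ p := Real.rpow_nonneg (abs_nonneg t) p
    rcases le_or_gt t 0 with h0 | h0
    · rw [hf0 t h0]
      nlinarith [mul_nonneg hC0 habs]
    rcases le_or_gt t δ' with h1 | h1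
    · have hd : dist t 0 < δ := by
        rw [Real.dist_eq, sub_zero, abs_of_pos h0]; linarith
      have hlt1 := hδ (Set.mem_Ioi.2 h0) hd
      have h1' : |f t| / |t| < 1 := by rwa [Real.dist_eq, sub_zero, abs_div] at hlt1
      have hft : |f t| ≤ t := by
        have h2 := (div_lt_one (abs_pos.2 h0.ne')).mp h1'
        rw [abs_of_pos h0] at h2
        exact h2.le
      have ht2 : t * t ≤ |t| ^ p := by
        rw [abs_of_pos h0]
        have h2 : t ^ (2:ℝ) ≤ t ^ p :=
          Real.rpow_le_rpow_of_exponent_ge h0 (le_trans h1 hδ'1) hp2.le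
        calc t * t = t ^ (2:ℝ) := by
              rw [show (2:ℝ) = ((2:ℕ):ℝ) by norm_num, Real.rpow_natCast]; ring
          _ ≤ t ^ p := h2
      have hft' := (abs_le.1 hft).1
      nlinarith [mul_nonneg (by linarith : (0:ℝ) ≤ f t + t) h0.le,
        mul_nonneg (by linarith : (0:ℝ) ≤ C - 1) habs]
    rcases le_or_gt t (max t₀ δ') with h2 | h2
    · have hb := hC₀ t ⟨h1.le, h2⟩
      rw [Real.norm_eq_abs] at hb
      simp only [Pi.mul_apply, id_eq] at hb
      have htp : δ' ^ p ≤ |t| ^ p := by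
        rw [abs_of_pos h0]
        exact Real.rpow_le_rpow hδ'0.le h1.le hp0.le
      have hcan : max C₀ 0 / δ' ^ p * δ' ^ p = max C₀ 0 := div_mul_cancel₀ _ (ne_of_gt hδp)
      have hmul := mul_le_mul_of_nonneg_left htp (by positivity : (0:ℝ) ≤ max C₀ 0 / δ' ^ p)
      have hexp : C * |t| ^ p = |t| ^ p + max C₀ 0 / δ' ^ p * |t| ^ p := by
        rw [hCdef]; ring
      linarith [(abs_le.1 hb).1, le_max_left C₀ 0, hexp, hmul, hcan, habs]
    · have hfp := hfpos t (lt_of_le_of_lt (le_max_left t₀ δ') h2)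
      nlinarith [mul_pos hfp h0, mul_nonneg hC0 habs]
  -- uniform bound on ∫ |u n|^p
  clear_value δ'
  obtain ⟨Mb, hMb⟩ := hbdd
  set S : ℝ := (Mb ^ 2) ^ (p / 2) with hSdef
  have hS0 : 0 ≤ S := Real.rpow_nonneg (sq_nonneg Mb) _
  have hBn : ∀ n, (∫ x, |u n x| ^ p) ≤ S := by
    intro n
    have hb := hMb n
    unfold sobNorm at hb
    set A := ∫ x, ‖fderiv ℝ (u n) x‖ ^ 2 with hA
    set B := ∫ x, |u n x| ^ p with hBdef
    have hA0 : 0 ≤ A := integral_nonneg fun x => sq_nonneg _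
    have hB0 : 0 ≤ B := integral_nonneg fun x => Real.rpow_nonneg (abs_nonneg _) _
    have hBp0 : 0 ≤ B ^ (2 / p) := Real.rpow_nonneg hB0 _
    have hsum : 0 ≤ A + B ^ (2 / p) := by linarith
    have h2 : A + B ^ (2 / p) ≤ Mb ^ 2 := by
      nlinarith [Real.sq_sqrt hsum, Real.sqrt_nonneg (A + B ^ (2 / p))]
    have h3 : B ^ (2 / p) ≤ Mb ^ 2 := by linarith
    have h4 : (B ^ (2 / p)) ^ (p / 2) ≤ (Mb ^ 2) ^ (p / 2) :=
      Real.rpow_le_rpow hBp0 h3 (by positivity)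
    have h5 : (B ^ (2 / p)) ^ (p / 2) = B := by
      rw [← Real.rpow_mul hB0]
      rw [show 2 / p * (p / 2) = 1 by field_simp, Real.rpow_one]
    rwa [h5] at h4
  clear_value S
  -- integrability for the sequence
  have hupint : ∀ n, Integrable (fun x => |u n x| ^ p) := by
    intro n
    have hc : Continuous fun x => |u n x| ^ p :=
      (continuous_abs.comp (hu n).1.continuous).rpow_const fun x => Or.inr hp0.le
    have hs : HasCompactSupport fun x => |u n x| ^ p :=
      (hu n).2.comp_left (g := fun t : ℝ => |t| ^ p)
        (by simp [Real.zero_rpow (ne_of_gt hp0)])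
    exact hc.integrable_of_hasCompactSupport hs
  have hfuint : ∀ n, Integrable (fun x => f (u n x) * u n x) := by
    intro n
    have hc : Continuous fun x => f (u n x) * u n x :=
      (hf.comp (hu n).1.continuous).mul (hu n).1.continuous
    exact hc.integrable_of_hasCompactSupport (hu n).2.mul_left
  -- the auxiliary nonnegative function g
  set G : ℝ := K₀ + C * S with hGdef
  have hG0 : 0 < G := by rw [hGdef]; nlinarith [mul_nonneg hC0 hS0]
  clear_value G
  set g : ℝ → ℝ := fun t => f t * t + C * |t| ^ p with hgdef
  have hgnn : ∀ t, 0 ≤ g t := hCg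
  have hgcont : Continuous g :=
    (hf.mul continuous_id).add
      (continuous_const.mul (continuous_abs.rpow_const fun x => Or.inr hp0.le))
  have hgint : ∀ n, Integrable (fun x => g (u n x)) := fun n =>
    (hfuint n).add ((hupint n).const_mul C)
  have hgIn : ∀ n, (∫ x, g (u n x)) ≤ G := by
    intro n
    have : (∫ x, g (u n x)) = (∫ x, f (u n x) * u n x) + C * ∫ x, |u n x| ^ p := by
      simp only [hgdef]
      rw [integral_add (hfuint n) ((hupint n).const_mul C), integral_const_mul]
    rw [this, hGdef]
    exact add_le_add (hK n) (mul_le_mul_of_nonneg_left (hBn n) hC0)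
  -- Fatou for v
  have humeas : ∀ n, Measurable (u n) := fun n => (hu n).1.continuous.measurable
  have hgv_meas : Measurable fun x => g (v x) := hgcont.measurable.comp hv
  have hgv_nonneg : ∀ x, 0 ≤ g (v x) := fun x => hgnn _
  have hlim : (∫⁻ x, ENNReal.ofReal (g (v x))) ≤ ENNReal.ofReal G := by
    have hae' : ∀ᵐ x : R2,
        ENNReal.ofReal (g (v x)) = liminf (fun n => ENNReal.ofReal (g (u n x))) atTop := by
      filter_upwards [hae] with x hx
      have : Tendsto (fun n => ENNReal.ofReal (g (u n x))) atTop
          (nhds (ENNReal.ofReal (g (v x)))) :=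
        (ENNReal.continuous_ofReal.tendsto _).comp ((hgcont.tendsto _).comp hx)
      exact this.liminf_eq.symm
    calc (∫⁻ x, ENNReal.ofReal (g (v x)))
        = ∫⁻ x, liminf (fun n => ENNReal.ofReal (g (u n x))) atTop := lintegral_congr_ae hae'
      _ ≤ liminf (fun n => ∫⁻ x, ENNReal.ofReal (g (u n x))) atTop :=
          lintegral_liminf_le fun n =>
            ENNReal.measurable_ofReal.comp (hgcont.measurable.comp (humeas n))
      _ ≤ ENNReal.ofReal G := by
          apply liminf_le_of_frequently_le'
          apply Frequently.of_forall
          intro n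
          rw [← ofReal_integral_eq_lintegral_ofReal (hgint n) (ae_of_all _ fun x => hgnn _)]
          exact ENNReal.ofReal_le_ofReal (hgIn n)
  have hgv_int : Integrable fun x => g (v x) := by
    refine ⟨hgv_meas.aestronglyMeasurable, ?_⟩
    rw [hasFiniteIntegral_iff_ofReal (ae_of_all _ hgv_nonneg)]
    exact lt_of_le_of_lt hlim ENNReal.ofReal_lt_top
  have hgvI : (∫ x, g (v x)) ≤ G := by
    rw [integral_eq_lintegral_of_nonneg_ae (ae_of_all _ hgv_nonneg)
      hgv_meas.aestronglyMeasurable]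
    calc (∫⁻ x, ENNReal.ofReal (g (v x))).toReal
        ≤ (ENNReal.ofReal G).toReal := ENNReal.toReal_mono ENNReal.ofReal_ne_top hlim
      _ = G := ENNReal.toReal_ofReal hG0.le
  -- conclusion : the full sequence already works
  refine ⟨id, strictMono_id, ?_⟩
  intro ψ hψs hψc
  have hψcont : Continuous ψ := hψs.continuous
  obtain ⟨x₀, hx₀⟩ := hψcont.norm.exists_forall_ge_of_hasCompactSupport hψc.norm
  set Cψ : ℝ := ‖ψ x₀‖ with hCψdef
  have hCψ0 : 0 ≤ Cψ := norm_nonneg _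
  have hψb : ∀ x, |ψ x| ≤ Cψ := fun x => by
    simpa [Real.norm_eq_abs] using hx₀ x
  have hψint : Integrable ψ := hψcont.integrable_of_hasCompactSupport hψc
  rw [Metric.tendsto_atTop]
  intro ε hε
  set M : ℝ := max (t₀ + 1) (max 1 (6 * (Cψ * G + 1) / ε)) with hMdef
  have hMt : t₀ < M := lt_of_lt_of_le (lt_add_one t₀) (le_max_left _ _)
  have hM1 : (1:ℝ) ≤ M := le_trans (le_max_left 1 _) (le_max_right _ _)
  have hM0 : (0:ℝ) < M := lt_of_lt_of_le one_pos hM1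
  have h6 : 6 * (Cψ * G + 1) / ε ≤ M := le_trans (le_max_right _ _) (le_max_right _ _)
  clear_value M
  set fM : ℝ → ℝ := fun t => f (min t M) with hfMdef
  have hfMc : Continuous fM := hf.comp (continuous_id.min continuous_const)
  -- key pointwise estimate
  have hkey : ∀ t : ℝ, |f t - fM t| ≤ 2 / M * g t := by
    intro t
    rcases le_or_gt t M with h | h
    · have : fM t = f t := by simp [hfMdef, min_eq_left h]
      rw [this, sub_self, abs_zero]
      exact mul_nonneg (by positivity) (hgnn t)
    · have hmin : fM t = f M := by simp [hfMdef, min_eq_right h.le]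
      have hfM0 : 0 < f M := hfpos M hMt
      have hfmle : f M ≤ f t := hfmono M t hMt h.le
      have hft0 : 0 < f t := lt_of_lt_of_le hfM0 hfmle
      have ht0 : 0 < t := lt_trans hM0 h
      rw [hmin, abs_of_nonneg (by linarith)]
      simp only [hgdef]
      have habs : 0 ≤ C * |t| ^ p := mul_nonneg hC0 (Real.rpow_nonneg (abs_nonneg t) p)
      rw [div_mul_eq_mul_div, le_div_iff₀ hM0]
      nlinarith [mul_le_mul_of_nonneg_left h.le hft0.le, mul_pos hfM0 hM0]
  -- generic tail estimate
  have htail : ∀ w : R2 → ℝ,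
      Integrable (fun x => f (w x) * ψ x) → Integrable (fun x => fM (w x) * ψ x) →
      Integrable (fun x => g (w x)) → (∫ x, g (w x)) ≤ G →
      |(∫ x, f (w x) * ψ x) - ∫ x, fM (w x) * ψ x| ≤ 2 * Cψ * G / M := by
    intro w h1 h2 h3 h4
    rw [← integral_sub h1 h2]
    have e1 : |∫ x, (f (w x) * ψ x - fM (w x) * ψ x)|
        ≤ ∫ x, |f (w x) * ψ x - fM (w x) * ψ x| := by
      simpa [Real.norm_eq_abs] using
        norm_integral_le_integral_norm (fun x => f (w x) * ψ x - fM (w x) * ψ x)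
    have e2 : (∫ x, |f (w x) * ψ x - fM (w x) * ψ x|)
        ≤ ∫ x, 2 * Cψ / M * g (w x) := by
      apply integral_mono (h1.sub h2).abs (h3.const_mul _)
      intro x
      simp only [Pi.sub_apply]
      have e0 : f (w x) * ψ x - fM (w x) * ψ x = (f (w x) - fM (w x)) * ψ x := by ring
      rw [e0, abs_mul]
      calc |f (w x) - fM (w x)| * |ψ x| ≤ 2 / M * g (w x) * Cψ :=
            mul_le_mul (hkey (w x)) (hψb x) (abs_nonneg _)
              (mul_nonneg (by positivity) (hgnn _))
        _ = 2 * Cψ / M * g (w x) := by ring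
    have e3 : (∫ x, 2 * Cψ / M * g (w x)) = 2 * Cψ / M * ∫ x, g (w x) :=
      integral_const_mul _ _
    have e4 : 2 * Cψ / M * (∫ x, g (w x)) ≤ 2 * Cψ / M * G :=
      mul_le_mul_of_nonneg_left h4 (by positivity)
    calc |∫ x, (f (w x) * ψ x - fM (w x) * ψ x)|
        ≤ ∫ x, |f (w x) * ψ x - fM (w x) * ψ x| := e1
      _ ≤ ∫ x, 2 * Cψ / M * g (w x) := e2
      _ = 2 * Cψ / M * ∫ x, g (w x) := e3
      _ ≤ 2 * Cψ / M * G := e4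
      _ = 2 * Cψ * G / M := by ring
  -- integrability for the truncated products
  have hfMuint : ∀ n, Integrable (fun x => fM (u n x) * ψ x) := fun n =>
    ((hfMc.comp (hu n).1.continuous).mul hψcont).integrable_of_hasCompactSupport
      hψc.mul_left
  have hfuψint : ∀ n, Integrable (fun x => f (u n x) * ψ x) := fun n =>
    ((hf.comp (hu n).1.continuous).mul hψcont).integrable_of_hasCompactSupport
      hψc.mul_left
  obtain ⟨B₁, hB₁⟩ := (isCompact_Icc (a := (0:ℝ)) (b := M)).exists_bound_of_continuousOn
    hf.continuousOn
  set B' : ℝ := max B₁ 0 with hB'def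
  have hB'0 : 0 ≤ B' := le_max_right _ _
  have hB' : ∀ t : ℝ, |fM t| ≤ B' := by
    intro t
    rcases le_or_gt (min t M) 0 with h | h
    · rw [hfMdef]; simp only
      rw [hf0 _ h, abs_zero]; exact hB'0
    · have hmem : min t M ∈ Set.Icc (0:ℝ) M := ⟨h.le, min_le_right _ _⟩
      have := hB₁ _ hmem
      rw [Real.norm_eq_abs] at this
      exact le_trans this (le_max_left _ _)
  have hfMvψint : Integrable fun x => fM (v x) * ψ x :=
    hψint.bdd_mul (c := B') (hfMc.measurable.comp hv).aestronglyMeasurable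
      (ae_of_all _ fun x => by simpa [Real.norm_eq_abs] using hB' (v x))
  have hdiffint : Integrable fun x => (f (v x) - fM (v x)) * ψ x := by
    apply Integrable.mono' (hgv_int.const_mul (2 * Cψ / M))
    · exact (((hf.measurable.comp hv).sub (hfMc.measurable.comp hv)).mul
        hψcont.measurable).aestronglyMeasurable
    · apply ae_of_all
      intro x
      rw [Real.norm_eq_abs, abs_mul]
      calc |f (v x) - fM (v x)| * |ψ x| ≤ 2 / M * g (v x) * Cψ :=
            mul_le_mul (hkey _) (hψb x) (abs_nonneg _)
              (mul_nonneg (by positivity) (hgnn _))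
        _ = 2 * Cψ / M * g (v x) := by ring
  have hfvψint : Integrable fun x => f (v x) * ψ x := by
    exact (hdiffint.add hfMvψint).congr
      (ae_of_all _ fun x => by simp only [Pi.add_apply]; ring)
  -- dominated convergence for the truncated integrals
  have hDCT : Tendsto (fun n => ∫ x, fM (u n x) * ψ x) atTop
      (nhds (∫ x, fM (v x) * ψ x)) := by
    apply tendsto_integral_of_dominated_convergence (fun x => B' * |ψ x|)
    · intro n
      exact ((hfMc.comp (hu n).1.continuous).mul hψcont).aestronglyMeasurable
    · exact hψint.abs.const_mul B'
    · intro n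
      apply ae_of_all
      intro x
      rw [Real.norm_eq_abs, abs_mul]
      exact mul_le_mul_of_nonneg_right (hB' _) (abs_nonneg _)
    · filter_upwards [hae] with x hx
      exact ((hfMc.tendsto _).comp hx).mul tendsto_const_nhds
  obtain ⟨N, hN⟩ := Metric.tendsto_atTop.mp hDCT (ε / 3) (by linarith)
  refine ⟨N, fun n hn => ?_⟩
  have t1 := htail (u n) (hfuψint n) (hfMuint n) (hgint n) (hgIn n)
  have t2 := htail v hfvψint hfMvψint hgv_int hgvI
  have t3 := hN n hn
  rw [Real.dist_eq] at t3 ⊢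
  have hτ : 2 * Cψ * G / M < ε / 3 := by
    have hCG : 0 ≤ Cψ * G := mul_nonneg hCψ0 hG0.le
    rw [div_lt_iff₀ hM0]
    have heq : ε / 3 * (6 * (Cψ * G + 1) / ε) = 2 * (Cψ * G + 1) := by
      field_simp; ring
    nlinarith [mul_le_mul_of_nonneg_left h6 (by positivity : (0:ℝ) ≤ ε / 3)]
  have habs1 : |(∫ x, f (u n x) * ψ x) - ∫ x, f (v x) * ψ x|
      ≤ |(∫ x, f (u n x) * ψ x) - ∫ x, fM (u n x) * ψ x|
        + |(∫ x, fM (u n x) * ψ x) - ∫ x, fM (v x) * ψ x|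
        + |(∫ x, fM (v x) * ψ x) - ∫ x, f (v x) * ψ x| := by
    have h1 := abs_sub_le (∫ x, f (u n x) * ψ x) (∫ x, fM (u n x) * ψ x)
      (∫ x, f (v x) * ψ x)
    have h2 := abs_sub_le (∫ x, fM (u n x) * ψ x) (∫ x, fM (v x) * ψ x)
      (∫ x, f (v x) * ψ x)
    linarith
  have t2' : |(∫ x, fM (v x) * ψ x) - ∫ x, f (v x) * ψ x| ≤ 2 * Cψ * G / M := by
    rw [abs_sub_comm]; exact t2
  simp only [id] at *
  linarith
end
end

section
/- Let f : ℝ → ℝ be continuous with f(t) = 0 for all t ≤ 0, and suppose t ↦ f(t)/t⁵ is strictly increasing on (0,+∞). Set F(t) = ∫₀^t f(s) ds. Then for all s ≥ 0 and all t > 0 one has ((1 − t⁶)/6) f(s) s + F(s t) − F(s) ≥ 0. -/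
open MeasureTheory Real Filter Topology

noncomputable section

/-- key inequality in Lemma 3.4 via `(f₂)`:
`((1-t⁶)/6) f(s)s + F(st) - F(s) ≥ 0` for all `s ≥ 0`, `t > 0`. -/
theorem stmt_12 (f : ℝ → ℝ) (hf : Continuous f) (hf0 : ∀ t ≤ (0:ℝ), f t = 0)
    (hf2 : StrictMonoOn (fun t => f t / t ^ 5) (Set.Ioi 0)) :
    ∀ s : ℝ, 0 ≤ s → ∀ t : ℝ, 0 < t →
      0 ≤ (1 - t ^ 6) / 6 * (f s * s) + Fint f (s * t) - Fint f s := by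
  intro s hs t ht
  rcases eq_or_lt_of_le hs with rfl | hs
  · simp [Fint, hf0 0 le_rfl]
  have hs5 : (0:ℝ) < s ^ 5 := by positivity
  have key1 : ∀ τ : ℝ, 1 ≤ τ → 0 ≤ f (s * τ) - τ ^ 5 * f s := by
    intro τ hτ
    have hτ0 : (0:ℝ) < τ := lt_of_lt_of_le one_pos hτ
    have := hf2.monotoneOn (Set.mem_Ioi.mpr hs)
      (Set.mem_Ioi.mpr (by positivity : (0:ℝ) < s * τ)) (by nlinarith : s ≤ s * τ)
    rw [div_le_div_iff₀ hs5 (by positivity)] at this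
    nlinarith [pow_pos hτ0 5]
  have key2 : ∀ τ : ℝ, 0 < τ → τ ≤ 1 → f (s * τ) - τ ^ 5 * f s ≤ 0 := by
    intro τ hτ0 hτ
    have := hf2.monotoneOn (Set.mem_Ioi.mpr (by positivity : (0:ℝ) < s * τ))
      (Set.mem_Ioi.mpr hs) (by nlinarith : s * τ ≤ s)
    rw [div_le_div_iff₀ (by positivity) hs5] at this
    nlinarith [pow_pos hτ0 5]
  have hsub : Fint f (s * t) - Fint f s = ∫ τ in (1:ℝ)..t, s * f (s * τ) := by
    have h1 : Fint f (s * t) - Fint f s = ∫ x in s..(s * t), f x := by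
      rw [Fint, Fint]
      exact intervalIntegral.integral_interval_sub_left
        (hf.intervalIntegrable _ _) (hf.intervalIntegrable _ _)
    have h2 := intervalIntegral.smul_integral_comp_mul_left (a := 1) (b := t) f s
    rw [mul_one] at h2
    rw [h1, intervalIntegral.integral_const_mul, ← h2, smul_eq_mul]
  have hpow : (1 - t ^ 6) / 6 * (f s * s) = ∫ τ in (1:ℝ)..t, -(s * f s * τ ^ 5) := by
    rw [intervalIntegral.integral_neg, intervalIntegral.integral_const_mul, integral_pow]
    push_cast
    ring
  have hc1 : Continuous fun τ : ℝ => -(s * f s * τ ^ 5) := by continuity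
  have hc2 : Continuous fun τ : ℝ => s * f (s * τ) := by
    exact continuous_const.mul (hf.comp (continuous_const.mul continuous_id))
  rw [hpow, add_sub_assoc, hsub, ← intervalIntegral.integral_add
    (hc1.intervalIntegrable _ _) (hc2.intervalIntegrable _ _)]
  have hintg : ∀ τ : ℝ, -(s * f s * τ ^ 5) + s * f (s * τ) = s * (f (s * τ) - τ ^ 5 * f s) := by
    intro τ; ring
  simp only [hintg]
  rcases le_or_gt 1 t with h | h
  · apply intervalIntegral.integral_nonneg h
    intro τ hτ
    have := key1 τ hτ.1
    nlinarith
  · have hnn : 0 ≤ ∫ τ in t..(1:ℝ), -(s * (f (s * τ) - τ ^ 5 * f s)) := by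
      apply intervalIntegral.integral_nonneg h.le
      intro τ hτ
      have hτ0 : 0 < τ := lt_of_lt_of_le ht hτ.1
      have := key2 τ hτ0 hτ.2
      nlinarith
    rw [intervalIntegral.integral_symm]
    rw [intervalIntegral.integral_neg] at hnn
    linarith
end
end

section
/- Let p ∈ (1,2), a_∞ > 0, and let f : ℝ → ℝ be continuous with f(t) = 0 for t ≤ 0 and with t ↦ f(t)/t⁵ strictly increasing on (0,+∞). If u : ℝ² → ℝ is smooth with compact support and satisfies J_∞'(u)[u] = 0 (i.e. u lies on the Nehari manifold), then J_∞(t u) ≤ J_∞(u) for every t > 0. -/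
open MeasureTheory Real Filter Topology

noncomputable section

section AuxStmt14

/-- `F` vanishes on nonpositive reals. -/
lemma Fint_nonpos (f : ℝ → ℝ) (hf0 : ∀ t ≤ (0:ℝ), f t = 0) {s : ℝ} (hs : s ≤ 0) :
    Fint f s = 0 := by
  unfold Fint
  rw [intervalIntegral.integral_symm]
  have h : Set.EqOn f 0 (Set.uIcc s 0) := by
    intro x hx
    rw [Set.uIcc_of_le hs] at hx
    exact hf0 x hx.2
  rw [intervalIntegral.integral_congr h]
  simp

/-- Key pointwise inequality from `(f₂)`. -/
lemma key_ineq (f : ℝ → ℝ) (hf : Continuous f) (hf0 : ∀ t ≤ (0:ℝ), f t = 0)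
    (hf2 : CondF2 f) {t : ℝ} (ht : 0 < t) (s : ℝ) :
    (t ^ 6 - 1) / 6 * (f s * s) ≤ Fint f (t * s) - Fint f s := by
  rcases le_or_gt s 0 with hs | hs
  · rw [Fint_nonpos f hf0 hs, Fint_nonpos f hf0 (mul_nonpos_of_nonneg_of_nonpos ht.le hs),
      hf0 s hs]
    simp
  · have hmono := hf2.monotoneOn
    have hint : ∀ a b : ℝ, IntervalIntegrable f volume a b := fun a b =>
      hf.intervalIntegrable a b
    have hsne : s ^ 5 ≠ 0 := by positivity
    have hsub : Fint f (t * s) - Fint f s = ∫ τ in s..(t * s), f τ := by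
      unfold Fint
      rw [intervalIntegral.integral_interval_sub_left (hint 0 (t * s)) (hint 0 s)]
    rw [hsub]
    have hcont : Continuous fun τ : ℝ => f s / s ^ 5 * τ ^ 5 := by continuity
    rcases le_or_gt 1 t with h1 | h1
    · have hts : s ≤ t * s := le_mul_of_one_le_left hs.le h1
      have hcomp : ∀ τ ∈ Set.Icc s (t * s), f s / s ^ 5 * τ ^ 5 ≤ f τ := by
        intro τ hτ
        have hτ0 : 0 < τ := lt_of_lt_of_le hs hτ.1
        have h := hmono (Set.mem_Ioi.mpr hs) (Set.mem_Ioi.mpr hτ0) hτ.1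
        calc f s / s ^ 5 * τ ^ 5 ≤ f τ / τ ^ 5 * τ ^ 5 :=
              mul_le_mul_of_nonneg_right h (by positivity)
          _ = f τ := div_mul_cancel₀ _ (by positivity)
      have hI := intervalIntegral.integral_mono_on hts
        (hcont.intervalIntegrable s (t * s)) (hint s (t * s)) hcomp
      have heq : (∫ τ in s..(t * s), f s / s ^ 5 * τ ^ 5)
          = (t ^ 6 - 1) / 6 * (f s * s) := by
        rw [intervalIntegral.integral_const_mul, integral_pow]
        push_cast
        field_simp
        ring
      linarith [heq ▸ hI]
    · have hts : t * s ≤ s := by nlinarith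
      have hcomp : ∀ τ ∈ Set.Icc (t * s) s, f τ ≤ f s / s ^ 5 * τ ^ 5 := by
        intro τ hτ
        have hτ0 : 0 < τ := lt_of_lt_of_le (mul_pos ht hs) hτ.1
        have h := hmono (Set.mem_Ioi.mpr hτ0) (Set.mem_Ioi.mpr hs) hτ.2
        calc f τ = f τ / τ ^ 5 * τ ^ 5 := (div_mul_cancel₀ _ (by positivity)).symm
          _ ≤ f s / s ^ 5 * τ ^ 5 := mul_le_mul_of_nonneg_right h (by positivity)
      have hI := intervalIntegral.integral_mono_on hts
        (hint (t * s) s) (hcont.intervalIntegrable (t * s) s) hcomp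
      have heq : (∫ τ in (t * s)..s, f s / s ^ 5 * τ ^ 5)
          = (1 - t ^ 6) / 6 * (f s * s) := by
        rw [intervalIntegral.integral_const_mul, integral_pow]
        push_cast
        field_simp
        ring
      rw [intervalIntegral.integral_symm]
      linarith [heq ▸ hI]

lemma gaugeA1_smul (u : R2 → ℝ) (t : ℝ) (x : R2) :
    gaugeA1 (fun y => t * u y) x = t ^ 2 * gaugeA1 u x := by
  unfold gaugeA1
  have h : ∀ y : R2, (x 1 - y 1) * (t * u y) ^ 2 / ‖x - y‖ ^ 2
      = t ^ 2 * ((x 1 - y 1) * (u y) ^ 2 / ‖x - y‖ ^ 2) := fun y => by ring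
  simp_rw [h, MeasureTheory.integral_const_mul]
  ring

lemma gaugeA2_smul (u : R2 → ℝ) (t : ℝ) (x : R2) :
    gaugeA2 (fun y => t * u y) x = t ^ 2 * gaugeA2 u x := by
  unfold gaugeA2
  have h : ∀ y : R2, (x 0 - y 0) * (t * u y) ^ 2 / ‖x - y‖ ^ 2
      = t ^ 2 * ((x 0 - y 0) * (u y) ^ 2 / ‖x - y‖ ^ 2) := fun y => by ring
  simp_rw [h, MeasureTheory.integral_const_mul]
  ring

lemma pow_ineq1 (t : ℝ) : (t ^ 2 - 1) / 2 ≤ (t ^ 6 - 1) / 6 := by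
  nlinarith [mul_nonneg (sq_nonneg (t ^ 2 - 1)) (sq_nonneg t), sq_nonneg (t ^ 2 - 1)]

lemma rpow_ineq {t p : ℝ} (ht : 0 < t) (hp0 : 0 < p) (hp6 : p ≤ 6) :
    (t ^ p - 1) / p ≤ (t ^ 6 - 1) / 6 := by
  have hw : p / 6 + (1 - p / 6) = 1 := by ring
  have hg := Real.geom_mean_le_arith_mean2_weighted (by positivity)
    (by linarith : (0:ℝ) ≤ 1 - p / 6) (by positivity : (0:ℝ) ≤ t ^ 6) zero_le_one hw
  have hq : ((t : ℝ) ^ (6 : ℕ)) ^ (p / 6) = t ^ p := by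
    rw [← Real.rpow_natCast t 6, ← Real.rpow_mul ht.le]
    congr 1
    push_cast
    ring
  rw [hq, Real.one_rpow, mul_one, mul_one] at hg
  rw [div_le_div_iff₀ hp0 (by norm_num : (0:ℝ) < 6)]
  nlinarith [hg]

lemma alg_main {t K B P a p q D : ℝ} (hK : 0 ≤ K) (hB : 0 ≤ B) (hP : 0 ≤ P)
    (ha : 0 < a) (hp : 0 < p)
    (h1 : (t ^ 2 - 1) / 2 ≤ (t ^ 6 - 1) / 6)
    (h2 : (q - 1) / p ≤ (t ^ 6 - 1) / 6)
    (hF : (t ^ 6 - 1) / 6 * (K + 3 * B + a * P) ≤ D) :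
    (1 / 2) * (t ^ 2 * K + t ^ 6 * B) + (a / p) * (q * P) - D
      ≤ (1 / 2) * (K + B) + (a / p) * P := by
  have hpne : p ≠ 0 := ne_of_gt hp
  have e1 : (t ^ 2 - 1) / 2 * K ≤ (t ^ 6 - 1) / 6 * K := mul_le_mul_of_nonneg_right h1 hK
  have e2 : a * ((q - 1) / p) * P ≤ a * ((t ^ 6 - 1) / 6) * P :=
    mul_le_mul_of_nonneg_right (mul_le_mul_of_nonneg_left h2 ha.le) hP
  have e3 : (a / p) * (q * P) - (a / p) * P = a * ((q - 1) / p) * P := by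
    field_simp
  nlinarith [e1, e2, e3, hF]

end AuxStmt14

/-- consequence of `(f₂)`, step (2) in Lemma 3.4: if `u` lies on the Nehari
manifold then `J_∞(tu) ≤ J_∞(u)` for all `t > 0`. -/
theorem stmt_14 (p aInf : ℝ) (f : ℝ → ℝ) (hp1 : 1 < p) (hp2 : p < 2) (ha : 0 < aInf)
    (hf : Continuous f) (hf0 : ∀ t ≤ (0:ℝ), f t = 0)
    (hf2 : CondF2 f) :
    ∀ u : R2 → ℝ, ContDiff ℝ (⊤ : ℕ∞) u → HasCompactSupport u → JinfD p aInf f u = 0 →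
      ∀ t : ℝ, 0 < t → Jinf p aInf f (fun x => t * u x) ≤ Jinf p aInf f u := by
  intro u hu hsupp hN t ht
  have hp0 : 0 < p := lt_trans one_pos hp1
  have ht0 : t ≠ 0 := ne_of_gt ht
  have hdiff : Differentiable ℝ u := hu.differentiable (by simp)
  have hucont : Continuous u := hu.continuous
  -- pointwise scaling of the kinetic term
  have hker : ∀ x : R2, ‖fderiv ℝ (fun y => t * u y) x‖ ^ 2 = t ^ 2 * ‖fderiv ℝ u x‖ ^ 2 := by
    intro x
    rw [fderiv_const_mul (hdiff x) t, norm_smul]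
    simp [Real.norm_eq_abs, mul_pow, sq_abs]
  -- pointwise scaling of the full gradient+gauge integrand
  have hpt : (fun x : R2 => ‖fderiv ℝ (fun y => t * u y) x‖ ^ 2 +
        ((gaugeA1 (fun y => t * u y) x) ^ 2 + (gaugeA2 (fun y => t * u y) x) ^ 2)
          * (t * u x) ^ 2)
      = fun x : R2 => t ^ 2 * ‖fderiv ℝ u x‖ ^ 2 +
        t ^ 6 * (((gaugeA1 u x) ^ 2 + (gaugeA2 u x) ^ 2) * (u x) ^ 2) := by
    funext x
    rw [gaugeA1_smul, gaugeA2_smul, hker x]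
    ring
  -- integrability of kinetic term
  have hk_int : Integrable (fun x : R2 => ‖fderiv ℝ u x‖ ^ 2) := by
    apply Continuous.integrable_of_hasCompactSupport
    · exact ((hu.continuous_fderiv (by simp)).norm).pow 2
    · exact (hsupp.fderiv ℝ).comp_left (g := fun v : R2 →L[ℝ] ℝ => ‖v‖ ^ 2) (by simp)
  -- continuity of the primitive F
  have hFcont : Continuous (Fint f) := by
    unfold Fint
    exact intervalIntegral.continuous_primitive (fun a b => hf.intervalIntegrable a b) 0
  have hF0 : Fint f 0 = 0 := by unfold Fint; simp
  -- integrability of F(u), F(tu), f(u)u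
  have hFu_int : Integrable (fun x : R2 => Fint f (u x)) := by
    apply Continuous.integrable_of_hasCompactSupport (hFcont.comp hucont)
    exact hsupp.comp_left (g := Fint f) hF0
  have hFtu_int : Integrable (fun x : R2 => Fint f (t * u x)) := by
    apply Continuous.integrable_of_hasCompactSupport
      (hFcont.comp (continuous_const.mul hucont))
    exact hsupp.comp_left (g := fun s => Fint f (t * s)) (by simp [hF0])
  have hphi_int : Integrable (fun x : R2 => f (u x) * u x) := by
    apply Continuous.integrable_of_hasCompactSupport ((hf.comp hucont).mul hucont)
    exact hsupp.comp_left (g := fun s => f s * s) (by simp)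
  -- scaling of the |u|^p term
  have hPt : (∫ x : R2, |t * u x| ^ p) = t ^ p * ∫ x : R2, |u x| ^ p := by
    have h : ∀ x : R2, |t * u x| ^ p = t ^ p * |u x| ^ p := by
      intro x
      rw [abs_mul, abs_of_pos ht, Real.mul_rpow ht.le (abs_nonneg _)]
    simp_rw [h]
    exact MeasureTheory.integral_const_mul _ _
  have hP0 : 0 ≤ ∫ x : R2, |u x| ^ p :=
    integral_nonneg fun x => by positivity
  -- integrated key inequality
  have hFmain : (t ^ 6 - 1) / 6 * (∫ x : R2, f (u x) * u x)
      ≤ (∫ x : R2, Fint f (t * u x)) - ∫ x : R2, Fint f (u x) := by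
    have h2 : (∫ x : R2, (t ^ 6 - 1) / 6 * (f (u x) * u x))
        ≤ ∫ x : R2, (Fint f (t * u x) - Fint f (u x)) := by
      apply integral_mono (hphi_int.const_mul _) (hFtu_int.sub hFu_int)
      intro x
      exact key_ineq f hf hf0 hf2 ht (u x)
    rw [MeasureTheory.integral_const_mul, integral_sub hFtu_int hFu_int] at h2
    exact h2
  -- the two algebraic inequalities
  have h1 := pow_ineq1 t
  have h2 : (t ^ p - 1) / p ≤ (t ^ 6 - 1) / 6 := rpow_ineq ht hp0 (by linarith)
  simp only [JinfD] at hN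
  simp only [Jinf]
  rw [hpt, hPt]
  by_cases hb : Integrable (fun x : R2 => ((gaugeA1 u x) ^ 2 + (gaugeA2 u x) ^ 2) * (u x) ^ 2)
  · -- integrable case
    have hmeq : (fun x : R2 => ‖fderiv ℝ u x‖ ^ 2 +
          3 * ((gaugeA1 u x) ^ 2 + (gaugeA2 u x) ^ 2) * (u x) ^ 2)
        = fun x : R2 => ‖fderiv ℝ u x‖ ^ 2 +
          3 * (((gaugeA1 u x) ^ 2 + (gaugeA2 u x) ^ 2) * (u x) ^ 2) := by
      funext x; ring
    rw [hmeq, integral_add hk_int (hb.const_mul 3), MeasureTheory.integral_const_mul] at hN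
    rw [integral_add (hk_int.const_mul _) (hb.const_mul _),
      MeasureTheory.integral_const_mul, MeasureTheory.integral_const_mul,
      integral_add hk_int hb]
    have hK0 : 0 ≤ ∫ x : R2, ‖fderiv ℝ u x‖ ^ 2 := integral_nonneg fun x => by positivity
    have hB0 : 0 ≤ ∫ x : R2, ((gaugeA1 u x) ^ 2 + (gaugeA2 u x) ^ 2) * (u x) ^ 2 :=
      integral_nonneg fun x => by positivity
    have hPhi : (∫ x : R2, f (u x) * u x)
        = (∫ x : R2, ‖fderiv ℝ u x‖ ^ 2)
          + 3 * (∫ x : R2, ((gaugeA1 u x) ^ 2 + (gaugeA2 u x) ^ 2) * (u x) ^ 2)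
          + aInf * ∫ x : R2, |u x| ^ p := by linarith
    rw [hPhi] at hFmain
    have halg := alg_main (t := t) (q := t ^ p) hK0 hB0 hP0 ha hp0 h1 h2 hFmain
    linarith
  · -- non-integrable case: all gauge integrals vanish
    have hbW : ∀ c : ℝ, c ≠ 0 →
        ¬ Integrable (fun x : R2 =>
          c * (((gaugeA1 u x) ^ 2 + (gaugeA2 u x) ^ 2) * (u x) ^ 2)) := by
      intro c hc h
      apply hb
      have h2' := h.const_mul c⁻¹
      have : (fun x : R2 => c⁻¹ * (c * (((gaugeA1 u x) ^ 2 + (gaugeA2 u x) ^ 2) * (u x) ^ 2)))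
          = fun x : R2 => ((gaugeA1 u x) ^ 2 + (gaugeA2 u x) ^ 2) * (u x) ^ 2 := by
        funext x
        field_simp
      rwa [this] at h2'
    have hz1 : (∫ x : R2, (‖fderiv ℝ u x‖ ^ 2 +
        3 * ((gaugeA1 u x) ^ 2 + (gaugeA2 u x) ^ 2) * (u x) ^ 2)) = 0 := by
      apply integral_undef
      intro h
      have h3 : Integrable (fun x : R2 =>
          3 * (((gaugeA1 u x) ^ 2 + (gaugeA2 u x) ^ 2) * (u x) ^ 2)) :=
        (h.sub hk_int).congr (Filter.Eventually.of_forall fun x => by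
          simp only [Pi.sub_apply]; ring)
      exact hbW 3 (by norm_num) h3
    have hz2 : (∫ x : R2, (‖fderiv ℝ u x‖ ^ 2 +
        ((gaugeA1 u x) ^ 2 + (gaugeA2 u x) ^ 2) * (u x) ^ 2)) = 0 := by
      apply integral_undef
      intro h
      have h3 : Integrable (fun x : R2 =>
          1 * (((gaugeA1 u x) ^ 2 + (gaugeA2 u x) ^ 2) * (u x) ^ 2)) :=
        (h.sub hk_int).congr (Filter.Eventually.of_forall fun x => by
          simp only [Pi.sub_apply]; ring)
      exact hbW 1 (by norm_num) h3
    have hz3 : (∫ x : R2, (t ^ 2 * ‖fderiv ℝ u x‖ ^ 2 +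
        t ^ 6 * (((gaugeA1 u x) ^ 2 + (gaugeA2 u x) ^ 2) * (u x) ^ 2))) = 0 := by
      apply integral_undef
      intro h
      have h3 : Integrable (fun x : R2 =>
          t ^ 6 * (((gaugeA1 u x) ^ 2 + (gaugeA2 u x) ^ 2) * (u x) ^ 2)) :=
        (h.sub (hk_int.const_mul (t ^ 2))).congr (Filter.Eventually.of_forall fun x => by
          simp only [Pi.sub_apply]; ring)
      exact hbW (t ^ 6) (by positivity) h3
    rw [hz1] at hN
    rw [hz2, hz3]
    have hPhi2 : (∫ x : R2, f (u x) * u x) = aInf * ∫ x : R2, |u x| ^ p := by linarith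
    rw [hPhi2] at hFmain
    -- now hN : 0 + aInf * P - Φ = 0, goal with zero gauge terms
    have e2 : aInf * ((t ^ p - 1) / p) * (∫ x : R2, |u x| ^ p)
        ≤ aInf * ((t ^ 6 - 1) / 6) * (∫ x : R2, |u x| ^ p) :=
      mul_le_mul_of_nonneg_right (mul_le_mul_of_nonneg_left h2 ha.le) hP0
    have e3 : (aInf / p) * (t ^ p * ∫ x : R2, |u x| ^ p) - (aInf / p) * ∫ x : R2, |u x| ^ p
        = aInf * ((t ^ p - 1) / p) * (∫ x : R2, |u x| ^ p) := by
      field_simp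
    nlinarith [hFmain, e2, e3, hN]
end
end
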